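/- arXiv:1603.03964 — 7 statements merged into one kernel-verified Lean document; each statement's English description precedes it below -/
import Mathlib

section
/- Let H = ([k],E,I) be a hypergraph with E = {1,...,l}, let c : E → ℤ^d be a general-position orthogonal representation of its line graph, and suppose |E \ E_j| ≤ d for every vertex j, where E_j is the set of edges incident with j. Fix g ∈ ℤ^d and n ≥ 1, and let S ⊆ {0,...,n−1}^l be the set of solutions of c_1 i_1 + ··· + c_l i_l = g. Then for every vertex j, the map S → ℤ^{E_j} sending (i_1,...,i_l) to (i_e)_{e∈E_j} is injective; consequently the tensor Σ_{(i_1,...,i_l)∈S} |(i_e)_{e∈E_1}⟩_1 ⊗ ··· ⊗ |(i_e)_{e∈E_k}⟩_k is, up to relabelling local basis vectors, a |S|-level GHZ state shared by all k parties. -/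
open Finset Filter

/-- `c : E → ℤ^d` is an orthogonal representation of the line graph of `H`:
`⟨c e, c f⟩ = 0` whenever the distinct edges `e ≠ f` are incident with no common vertex. -/
def IsOrthRep {k d : ℕ} {E : Type} (H : E → Finset (Fin k)) (c : E → Fin d → ℤ) : Prop :=
  ∀ e f : E, e ≠ f → (∀ v : Fin k, ¬(v ∈ H e ∧ v ∈ H f)) →
    ∑ t : Fin d, c e t * c f t = 0

/-- The vectors `c : E → ℤ^d` are in general position: any `min(d, |E|)` of them are
linearly independent (over the rationals). -/
def InGenPos {d : ℕ} {E : Type} [Fintype E] (c : E → Fin d → ℤ) : Prop :=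
  ∀ S : Finset E, S.card = min d (Fintype.card E) →
    LinearIndependent ℚ (fun e : S => fun t : Fin d => ((c e.val t : ℤ) : ℚ))

/-- Key injectivity lemma: two solutions agreeing on all edges incident with a fixed
vertex `j` are equal. -/
lemma ghz_key_inj {k l d n : ℕ} (H : Fin l → Finset (Fin k))
    (c : Fin l → Fin d → ℤ) (hgen : InGenPos c)
    (hcompl : ∀ j : Fin k, (Finset.univ.filter (fun e : Fin l => j ∉ H e)).card ≤ d)
    (g : Fin d → ℤ) (s s' : Fin l → Fin n)
    (hs : ∀ t : Fin d, ∑ e : Fin l, ((s e : ℕ) : ℤ) * c e t = g t)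
    (hs' : ∀ t : Fin d, ∑ e : Fin l, ((s' e : ℕ) : ℤ) * c e t = g t)
    (j : Fin k) (hag : ∀ e : Fin l, j ∈ H e → s e = s' e) : s = s' := by
  classical
  set T : Finset (Fin l) := Finset.univ.filter (fun e => j ∉ H e) with hT
  have hTcard : T.card ≤ min d l := by
    refine le_min (hcompl j) ?_
    simpa using Finset.card_le_univ T
  obtain ⟨T', hTT', -, hT'card⟩ := Finset.exists_subsuperset_card_eq
    (Finset.subset_univ T) hTcard (by simp)
  have hli := hgen T' (by simpa using hT'card)
  set q : Fin l → ℚ := fun e => ((s e : ℕ) : ℚ) - ((s' e : ℕ) : ℚ) with hq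
  have hq0 : ∀ e, j ∈ H e → q e = 0 := fun e he => by simp [hq, hag e he]
  have hz : ∀ t : Fin d, ∑ e : Fin l, (((s e : ℕ) : ℤ) - ((s' e : ℕ) : ℤ)) * c e t = 0 := by
    intro t
    simp only [sub_mul, Finset.sum_sub_distrib, hs t, hs' t, sub_self]
  have h1 : ∀ t : Fin d, ∑ e : Fin l, q e * ((c e t : ℤ) : ℚ) = 0 := by
    intro t
    have := hz t
    have : ((∑ e : Fin l, (((s e : ℕ) : ℤ) - ((s' e : ℕ) : ℤ)) * c e t : ℤ) : ℚ) = 0 := by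
      rw [this]; simp
    push_cast at this
    simpa [hq] using this
  have hsum : ∀ t : Fin d, ∑ e ∈ T', q e * ((c e t : ℤ) : ℚ) = 0 := by
    intro t
    rw [Finset.sum_subset (Finset.subset_univ T')]
    · exact h1 t
    · intro e _ he
      have : j ∈ H e := by
        by_contra hj
        exact he (hTT' (by simp [hT, hj]))
      simp [hq0 e this]
  have hzero : ∀ e : T', q e.val = 0 := by
    have := Fintype.linearIndependent_iff.mp hli (fun e => q e.val) ?_
    · exact this
    · funext t
      rw [Finset.sum_apply]
      have : ∑ e : T', q e.val * ((c e.val t : ℤ) : ℚ) = 0 := by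
        rw [Finset.sum_coe_sort T' (fun e => q e * ((c e t : ℤ) : ℚ))]
        exact hsum t
      simpa [Pi.smul_apply, smul_eq_mul] using this
  have hqall : ∀ e, q e = 0 := by
    intro e
    by_cases hje : j ∈ H e
    · exact hq0 e hje
    · exact hzero ⟨e, hTT' (by simp [hT, hje])⟩
  funext e
  have h := hqall e
  simp only [hq, sub_eq_zero] at h
  have : ((s e : ℕ) : ℚ) = ((s' e : ℕ) : ℚ) := h
  exact Fin.val_injective (by exact_mod_cast this)

/-- If `c : E → ℤ^d` is a general-position orthogonal representation of the line graph
of `H = ([k],E,I)` with `|E ∖ E_j| ≤ d` for every vertex `j`, then for every `g ∈ ℤ^d`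
and `n ≥ 1` the set `S` of solutions `(i_1,…,i_l) ∈ {0,…,n-1}^l` of
`c_1 i_1 + ⋯ + c_l i_l = g` restricts injectively to the edges incident with any one
vertex; consequently `Σ_{i∈S} |(i_e)_{e∈E_1}⟩ ⊗ ⋯ ⊗ |(i_e)_{e∈E_k}⟩` is, up to a
relabelling of the local basis vectors (injective maps `u j`), an `|S|`-level GHZ
state shared by all `k` parties. -/
theorem solutions_form_ghz {k l d : ℕ} (H : Fin l → Finset (Fin k))
    (c : Fin l → Fin d → ℤ) (horth : IsOrthRep H c) (hgen : InGenPos c)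
    (hcompl : ∀ j : Fin k, (Finset.univ.filter (fun e : Fin l => j ∉ H e)).card ≤ d)
    (g : Fin d → ℤ) (n : ℕ) (hn : 1 ≤ n) :
    let S : Finset (Fin l → Fin n) := Finset.univ.filter (fun s : Fin l → Fin n =>
      ∀ t : Fin d, ∑ e : Fin l, ((s e : ℕ) : ℤ) * c e t = g t)
    (∀ j : Fin k, Set.InjOn
        (fun s : Fin l → Fin n => fun e : {e : Fin l // j ∈ H e} => s e.val) ↑S) ∧
    ∃ u : (j : Fin k) → Fin S.card → (Fin l → Fin n),
      (∀ j : Fin k, Function.Injective (u j)) ∧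
      ∀ x : (j : Fin k) → Fin l → Fin n,
        ((S.filter (fun s : Fin l → Fin n =>
            ∀ j : Fin k, ∀ e : Fin l,
              (x j e : ℕ) = if j ∈ H e then (s e : ℕ) else 0)).card : ℂ)
          = ((Finset.univ.filter (fun i : Fin S.card => ∀ j : Fin k, x j = u j i)).card
              : ℂ) := by
  classical
  haveI : NeZero n := ⟨by omega⟩
  intro S
  have hmem : ∀ s : Fin l → Fin n, s ∈ S ↔
      ∀ t : Fin d, ∑ e : Fin l, ((s e : ℕ) : ℤ) * c e t = g t := by
    intro s; simp [S]
  have hinj : ∀ j : Fin k, ∀ s ∈ S, ∀ s' ∈ S,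
      (∀ e : Fin l, j ∈ H e → s e = s' e) → s = s' := by
    intro j s hsS s' hs'S hag
    exact ghz_key_inj H c hgen hcompl g s s' ((hmem s).mp hsS) ((hmem s').mp hs'S) j hag
  constructor
  · intro j s hsS s' hs'S heq
    exact hinj j s hsS s' hs'S (fun e he => congrFun heq ⟨e, he⟩)
  · set σ := S.equivFin.symm with hσ
    refine ⟨fun j i => fun e => if j ∈ H e then (σ i).val e else 0, ?_, ?_⟩
    · intro j i i' heq
      have hag : ∀ e : Fin l, j ∈ H e → (σ i).val e = (σ i').val e := by
        intro e he
        have := congrFun heq e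
        simpa [he] using this
      have : (σ i).val = (σ i').val :=
        hinj j _ (σ i).2 _ (σ i').2 hag
      exact σ.injective (Subtype.ext this)
    · intro x
      congr 1
      norm_cast
      refine Finset.card_bij' (fun s hs => σ.symm ⟨s, (Finset.mem_filter.mp hs).1⟩)
        (fun i _ => (σ i).val) ?_ ?_ ?_ ?_
      · intro s hs
        obtain ⟨hsS, hP⟩ := Finset.mem_filter.mp hs
        simp only [Finset.mem_filter, Finset.mem_univ, true_and]
        intro j
        funext e
        have h := hP j e
        have hval : (x j e : ℕ) = ((if j ∈ H e then (s e) else (0 : Fin n)) : Fin n).val := by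
          rw [apply_ite Fin.val]
          simpa using h
        have hx : x j e = if j ∈ H e then s e else 0 := Fin.val_injective hval
        rw [hx]
        simp [Equiv.apply_symm_apply]
      · intro i hi
        have hQ := (Finset.mem_filter.mp hi).2
        refine Finset.mem_filter.mpr ⟨(σ i).2, ?_⟩
        intro j e
        have := congrFun (hQ j) e
        rw [this]
        rw [apply_ite Fin.val]
        simp
      · intro s hs
        simp [Equiv.apply_symm_apply]
      · intro i hi
        simp [Equiv.symm_apply_apply]
end

section
/- Let H be a connected hypergraph on [k] with edge-connectivity λ(H). Then ω(GHZ^H_2, GHZ_2) ≥ 1/λ(H). -/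
open Finset Filter

/-- SLOCC convertibility between multipartite tensors, given by their coefficient
functions: party `j` has local space with basis indexed by `α j` resp. `β j`, and
`ψ →_SLOCC φ` iff there are local linear maps `A j` with `(A 1 ⊗ ⋯ ⊗ A k) ψ = φ`. -/
def SLOCCTo {k : ℕ} {α β : Fin k → Type} [∀ j, Fintype (α j)]
    (ψ : ((j : Fin k) → α j) → ℂ) (φ : ((j : Fin k) → β j) → ℂ) : Prop :=
  ∃ A : (j : Fin k) → β j → α j → ℂ,
    ∀ y : (j : Fin k) → β j,
      φ y = ∑ x : (j : Fin k) → α j, (∏ j : Fin k, A j (y j) (x j)) * ψ x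

/-- Party-wise `m`-th tensor power of a multipartite tensor. -/
def statePow {k : ℕ} {α : Fin k → Type} (ψ : ((j : Fin k) → α j) → ℂ) (m : ℕ) :
    ((j : Fin k) → Fin m → α j) → ℂ :=
  fun x => ∏ t : Fin m, ψ (fun j => x j t)

/-- `ω(ψ,φ) ≤ c`, where `ω(ψ,φ) = lim_{n→∞} (1/n)·inf{m | ψ^{⊗m} →_SLOCC φ^{⊗n}}`
is the asymptotic SLOCC conversion rate (the infimum being `+∞` when no `m` works). -/
def AsympRateLE {k : ℕ} {α β : Fin k → Type} [∀ j, Fintype (α j)]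
    (ψ : ((j : Fin k) → α j) → ℂ) (φ : ((j : Fin k) → β j) → ℂ) (c : ℝ) : Prop :=
  ∀ ε : ℝ, 0 < ε → ∀ᶠ n : ℕ in atTop,
    ∃ m : ℕ, SLOCCTo (statePow ψ m) (statePow φ n) ∧ (m : ℝ) ≤ (c + ε) * n

/-- `ω(ψ,φ) ≥ c`, where `ω` is the asymptotic SLOCC conversion rate. -/
def AsympRateGE {k : ℕ} {α β : Fin k → Type} [∀ j, Fintype (α j)]
    (ψ : ((j : Fin k) → α j) → ℂ) (φ : ((j : Fin k) → β j) → ℂ) (c : ℝ) : Prop :=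
  ∀ ε : ℝ, 0 < ε → ∀ᶠ n : ℕ in atTop,
    ∀ m : ℕ, SLOCCTo (statePow ψ m) (statePow φ n) → (c - ε) * n ≤ (m : ℝ)

/-- `ω(ψ,φ) = c`, where `ω` is the asymptotic SLOCC conversion rate. -/
def AsympRateEq {k : ℕ} {α β : Fin k → Type} [∀ j, Fintype (α j)]
    (ψ : ((j : Fin k) → α j) → ℂ) (φ : ((j : Fin k) → β j) → ℂ) (c : ℝ) : Prop :=
  AsympRateLE ψ φ c ∧ AsympRateGE ψ φ c

/-- The `k`-party `r`-level GHZ state `Σ_{i=1}^r |i⟩^{⊗k}` (levels labelled `0,…,r-1`):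
the coefficient of a basis vector is the number of levels `i` matching it. -/
noncomputable def ghzState (k r : ℕ) : ((_ : Fin k) → Fin r) → ℂ :=
  fun x => ((Finset.univ.filter (fun i : Fin r => ∀ j, x j = i)).card : ℂ)

/-- The state `GHZ^H_r = ⊗_{e∈E} GHZ_r^{(e)}` associated to a hypergraph `H` on `[k]`
with edge set `E` (the edge `e` being the set `H e` of vertices incident with it):
each edge carries an `r`-level GHZ state `Σ_i ⊗_{j ∈ H e} |i⟩_j` shared among its
incident parties, padded with `|0⟩` at the remaining parties.  Equivalently, it is
`Σ_{i : E → {0,…,r-1}} ⊗_{j} |(i_e)_{e ∋ j}⟩_j`, so the coefficient of a basis vector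
is the number of index tuples `i` producing it. -/
noncomputable def hyperGHZ {k : ℕ} {E : Type} [Fintype E] [DecidableEq E]
    (H : E → Finset (Fin k)) (r : ℕ) : ((j : Fin k) → E → Fin r) → ℂ :=
  fun x => ((Finset.univ.filter (fun i : E → Fin r =>
    ∀ j : Fin k, ∀ e : E, (x j e : ℕ) = if j ∈ H e then (i e : ℕ) else 0)).card : ℂ)

/-- One step between vertices `a b` of the hypergraph `H` along an edge in the set `F`. -/
def HStep {k : ℕ} {E : Type} (H : E → Finset (Fin k)) (F : Set E) (a b : Fin k) : Prop :=
  ∃ e ∈ F, a ∈ H e ∧ b ∈ H e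

/-- The hypergraph `H` is connected using only the edges in `F`: any two vertices are
joined by an alternating sequence of vertices and (allowed) edges. -/
def HConnectedOn {k : ℕ} {E : Type} (H : E → Finset (Fin k)) (F : Set E) : Prop :=
  ∀ a b : Fin k, Relation.ReflTransGen (HStep H F) a b

/-- The hypergraph `H` is connected. -/
def HConnected {k : ℕ} {E : Type} (H : E → Finset (Fin k)) : Prop :=
  HConnectedOn H Set.univ

/-- `H` is `m`-edge-connected: it remains connected after removing any set of fewer
than `m` edges. -/
def HEdgeConnected {k : ℕ} {E : Type} (H : E → Finset (Fin k)) (m : ℕ) : Prop :=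
  ∀ D : Finset E, D.card < m → HConnectedOn H {e | e ∉ D}

/-- The edge-connectivity `λ(H)`: the largest `m` such that `H` is `m`-edge-connected. -/
noncomputable def edgeConn {k : ℕ} {E : Type} (H : E → Finset (Fin k)) : ℕ :=
  sSup {m | HEdgeConnected H m}

section AuxProof

open Matrix

variable {k : ℕ}

/-- Flattening matrix of a multipartite tensor along the bipartition given by `p`. -/
noncomputable def flatMat {α : Fin k → Type} (p : Fin k → Prop) [DecidablePred p]
    (ψ : ((j : Fin k) → α j) → ℂ) :
    Matrix ((j : {j : Fin k // p j}) → α j.1) ((j : {j : Fin k // ¬ p j}) → α j.1) ℂ :=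
  fun u v => ψ fun j => if h : p j then u ⟨j, h⟩ else v ⟨j, h⟩

lemma rank_flatMat_le_of_slocc {α β : Fin k → Type} [∀ j, Fintype (α j)] [∀ j, Fintype (β j)]
    (p : Fin k → Prop) [DecidablePred p]
    {ψ : ((j : Fin k) → α j) → ℂ} {φ : ((j : Fin k) → β j) → ℂ}
    (h : SLOCCTo ψ φ) : (flatMat p φ).rank ≤ (flatMat p ψ).rank := by
  classical
  obtain ⟨A, hA⟩ := h
  set P : Matrix ((j : {j : Fin k // p j}) → β j.1) ((j : {j : Fin k // p j}) → α j.1) ℂ :=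
    fun u' u => ∏ j, A j.1 (u' j) (u j) with hP
  set Q : Matrix ((j : {j : Fin k // ¬ p j}) → β j.1) ((j : {j : Fin k // ¬ p j}) → α j.1) ℂ :=
    fun v' v => ∏ j, A j.1 (v' j) (v j) with hQ
  have key : flatMat p φ = P * flatMat p ψ * Qᵀ := by
    ext u' v'
    set e : ((j : Fin k) → α j) ≃ ((j : {j : Fin k // p j}) → α j.1) × ((j : {j : Fin k // ¬ p j}) → α j.1) :=
      Equiv.piEquivPiSubtypeProd p α with he
    have rhs : (P * flatMat p ψ * Qᵀ) u' v'
        = ∑ uv : ((j : {j : Fin k // p j}) → α j.1) × ((j : {j : Fin k // ¬ p j}) → α j.1),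
            P u' uv.1 * flatMat p ψ uv.1 uv.2 * Q v' uv.2 := by
      rw [Matrix.mul_apply]
      simp only [Matrix.mul_apply, Matrix.transpose_apply, Finset.sum_mul]
      rw [Fintype.sum_prod_type]
      rw [Finset.sum_comm]
    rw [rhs]
    have lhs : flatMat p φ u' v'
        = ∑ x : (j : Fin k) → α j,
            (∏ j, A j ((fun j => if h : p j then u' ⟨j, h⟩ else v' ⟨j, h⟩) j) (x j)) * ψ x := hA _
    rw [lhs]
    refine Fintype.sum_equiv e _ _ (fun x => ?_)
    have hx1 : ψ x = flatMat p ψ (e x).1 (e x).2 := by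
      unfold flatMat
      congr 1
      funext j
      by_cases hj : p j <;> simp [he, hj]
    have hsplit : (∏ j, A j ((fun j => if h : p j then u' ⟨j, h⟩ else v' ⟨j, h⟩) j) (x j))
        = P u' (e x).1 * Q v' (e x).2 := by
      rw [hP, hQ]
      rw [← Fintype.prod_subtype_mul_prod_subtype p
        (fun j => A j ((fun j => if h : p j then u' ⟨j, h⟩ else v' ⟨j, h⟩) j) (x j))]
      congr 1
      · exact Finset.prod_congr rfl (fun j _ => by simp [he, dif_pos j.2])
      · exact Finset.prod_congr rfl (fun j _ => by simp [he, dif_neg j.2])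
    rw [hx1, hsplit]
    ring
  rw [key]
  exact le_trans (Matrix.rank_mul_le_left _ _) (Matrix.rank_mul_le_right _ _)

end AuxProof
lemma ghz_const_eq_one {k : ℕ} (a : Fin k) (c : Fin 2) :
    ghzState k 2 (fun _ => c) = 1 := by
  classical
  unfold ghzState
  have : (Finset.univ.filter (fun i : Fin 2 => ∀ _j : Fin k, c = i)) = {c} := by
    ext i
    simp only [Finset.mem_filter, Finset.mem_univ, true_and, Finset.mem_singleton]
    constructor
    · intro h; exact (h a).symm
    · rintro rfl _; rfl
  rw [this]
  simp

lemma rank_flatMat_ghz_ge {k : ℕ} (p : Fin k → Prop) [DecidablePred p] {a b : Fin k}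
    (ha : p a) (hb : ¬ p b) (n : ℕ) :
    2 ^ n ≤ (flatMat (α := fun _ => Fin n → Fin 2) p (statePow (ghzState k 2) n)).rank := by
  classical
  set M := flatMat (α := fun _ => Fin n → Fin 2) p (statePow (ghzState k 2) n) with hM
  set P : Matrix (Fin n → Fin 2) ((j : {j : Fin k // p j}) → Fin n → Fin 2) ℂ :=
    fun w u => if u = (fun _ => w) then 1 else 0 with hPdef
  set Q : Matrix ((j : {j : Fin k // ¬ p j}) → Fin n → Fin 2) (Fin n → Fin 2) ℂ :=
    fun v w => if v = (fun _ => w) then 1 else 0 with hQdef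
  have key : P * (M * Q) = 1 := by
    ext w w'
    have h2 : ∀ u, (M * Q) u w' = M u (fun _ => w') := by
      intro u
      rw [Matrix.mul_apply]
      simp only [hQdef, mul_ite, mul_one, mul_zero]
      rw [Finset.sum_ite_eq' Finset.univ
        ((fun _ => w') : {j : Fin k // ¬ p j} → Fin n → Fin 2) (fun v => M u v)]
      simp
    rw [Matrix.mul_apply]
    simp only [h2, hPdef, ite_mul, one_mul, zero_mul]
    rw [Finset.sum_ite_eq' Finset.univ
      ((fun _ => w) : {j : Fin k // p j} → Fin n → Fin 2) (fun u => M u (fun _ => w'))]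
    simp only [Finset.mem_univ, if_true]
    have hMval : M (fun _ => w) (fun _ => w')
        = ∏ t : Fin n, ghzState k 2 (fun j => if p j then w t else w' t) := by
      rw [hM]
      unfold flatMat statePow
      exact Finset.prod_congr rfl (fun t _ => by
        congr 1
        funext j
        by_cases hj : p j <;> simp [hj])
    rw [hMval]
    by_cases hww : w = w'
    · subst hww
      have : ∀ t : Fin n, ghzState k 2 (fun j => if p j then w t else w t) = 1 := by
        intro t
        have harg : (fun j : Fin k => if p j then w t else w t) = fun _ => w t := by
          funext j; exact ite_self _
        rw [harg, ghz_const_eq_one a]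
      rw [Finset.prod_congr rfl (fun t _ => this t)]
      simp [Matrix.one_apply]
    · obtain ⟨t0, ht0⟩ : ∃ t0, w t0 ≠ w' t0 := Function.ne_iff.mp hww
      have hzero : ghzState k 2 (fun j => if p j then w t0 else w' t0) = 0 := by
        unfold ghzState
        have : (Finset.univ.filter
            (fun i : Fin 2 => ∀ j : Fin k, (if p j then w t0 else w' t0) = i)) = ∅ := by
          ext i
          simp only [Finset.mem_filter, Finset.mem_univ, true_and, Finset.notMem_empty,
            iff_false]
          intro h
          have h1 := h a
          have h2 := h b
          rw [if_pos ha] at h1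
          rw [if_neg hb] at h2
          exact ht0 (h1.trans h2.symm)
        rw [this]
        simp
      rw [Finset.prod_eq_zero (Finset.mem_univ t0) hzero]
      simp [Matrix.one_apply, Ne.symm, hww]
  have hcard : (2 : ℕ) ^ n = Fintype.card (Fin n → Fin 2) := by
    rw [Fintype.card_fun]
    simp
  calc (2 : ℕ) ^ n = (1 : Matrix (Fin n → Fin 2) (Fin n → Fin 2) ℂ).rank := by
        rw [Matrix.rank_one, hcard]
    _ = (P * (M * Q)).rank := by rw [key]
    _ ≤ (M * Q).rank := Matrix.rank_mul_le_right _ _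
    _ ≤ M.rank := Matrix.rank_mul_le_left _ _
section HyperFactor

open scoped Classical

variable {k m : ℕ} {E : Type}

/-- Condition that the `q`-side of a basis vector matches the GHZ pattern tuple `i`. -/
def hCondP (H : E → Finset (Fin k)) (q : Fin k → Prop)
    (u : (j : {j : Fin k // q j}) → Fin m → E → Fin 2) (i : Fin m → E → Fin 2) : Prop :=
  ∀ (t : Fin m) (j : {j : Fin k // q j}) (e : E),
    ((u j t e : ℕ) = if (j : Fin k) ∈ H e then (i t e : ℕ) else 0)

lemma hCondP_congr (H : E → Finset (Fin k)) (q : Fin k → Prop)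
    (u : (j : {j : Fin k // q j}) → Fin m → E → Fin 2) {i i' : Fin m → E → Fin 2}
    (hii' : ∀ t e, (∃ j ∈ H e, q j) → i t e = i' t e) :
    hCondP H q u i ↔ hCondP H q u i' := by
  unfold hCondP
  constructor
  · intro h t j e
    have hje := h t j e
    by_cases hm : (j : Fin k) ∈ H e
    · rw [if_pos hm] at hje ⊢
      rw [← hii' t e ⟨j, hm, j.2⟩]
      exact hje
    · rwa [if_neg hm] at hje ⊢
  · intro h t j e
    have hje := h t j e
    by_cases hm : (j : Fin k) ∈ H e
    · rw [if_pos hm] at hje ⊢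
      rw [hii' t e ⟨j, hm, j.2⟩]
      exact hje
    · rwa [if_neg hm] at hje ⊢

variable [Fintype E] [DecidableEq E]

/-- Flattened coefficient of `(hyperGHZ H 2)^{⊗ m}` as a sum of indicators. -/
lemma flatMat_hyperGHZ_eq (H : E → Finset (Fin k)) (p : Fin k → Prop) [DecidablePred p]
    (u : (j : {j : Fin k // p j}) → Fin m → E → Fin 2)
    (v : (j : {j : Fin k // ¬ p j}) → Fin m → E → Fin 2) :
    flatMat (α := fun _ => Fin m → E → Fin 2) p (statePow (hyperGHZ H 2) m) u v =
      ∑ i : Fin m → E → Fin 2,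
        if hCondP H p u i ∧ hCondP H (fun j => ¬ p j) v i then (1 : ℂ) else 0 := by
  classical
  unfold flatMat statePow hyperGHZ
  rw [Finset.prod_congr rfl (fun t _ => (Finset.sum_boole _ _).symm)]
  rw [Finset.prod_univ_sum, Fintype.piFinset_univ]
  refine Finset.sum_congr rfl (fun i _ => ?_)
  simp only [Fintype.prod_boole]
  congr 1
  rw [eq_iff_iff]
  constructor
  · intro h
    constructor
    · intro t j e
      have hje := h t j.1 e
      rwa [dif_pos j.2] at hje
    · intro t j e
      have hje := h t j.1 e
      rwa [dif_neg j.2] at hje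
  · rintro ⟨h1, h2⟩ t j e
    by_cases hj : p j
    · rw [dif_pos hj]
      exact h1 t ⟨j, hj⟩ e
    · rw [dif_neg hj]
      exact h2 t ⟨j, hj⟩ e

variable (H : E → Finset (Fin k)) (p : Fin k → Prop) [DecidablePred p]

/-- Glue pattern tuples on edges touching the `p`-side and the rest. -/
def hGlue (iL : Fin m → {e : E // ∃ j ∈ H e, p j} → Fin 2)
    (iR : Fin m → {e : E // ¬ ∃ j ∈ H e, p j} → Fin 2) : Fin m → E → Fin 2 :=
  fun t e => if h : ∃ j ∈ H e, p j then iL t ⟨e, h⟩ else iR t ⟨e, h⟩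

def hLift (D : Finset E) (c : Fin m → {e : E // e ∈ D} → Fin 2) :
    Fin m → {e : E // ∃ j ∈ H e, p j} → Fin 2 :=
  fun t e => if h : e.1 ∈ D then c t ⟨e.1, h⟩ else 0

def hRestr (D : Finset E)
    (iL : Fin m → {e : E // ∃ j ∈ H e, p j} → Fin 2) :
    Fin m → {e : E // e ∈ D} → Fin 2 :=
  fun t e => if h : ∃ j ∈ H e.1, p j then iL t ⟨e.1, h⟩ else 0

lemma sum_hGlue (f : (Fin m → E → Fin 2) → ℂ) :
    ∑ z : (Fin m → {e : E // ∃ j ∈ H e, p j} → Fin 2) ×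
          (Fin m → {e : E // ¬ ∃ j ∈ H e, p j} → Fin 2), f (hGlue H p z.1 z.2)
      = ∑ i : Fin m → E → Fin 2, f i := by
  refine Fintype.sum_bijective (fun z => hGlue H p z.1 z.2) ⟨?_, ?_⟩ _ _ (fun z => rfl)
  · rintro ⟨iL, iR⟩ ⟨iL', iR'⟩ h
    have h' : ∀ t e, hGlue H p iL iR t e = hGlue H p iL' iR' t e :=
      fun t e => congrFun (congrFun h t) e
    refine Prod.ext ?_ ?_
    · funext t e
      have h1 := h' t e.1
      unfold hGlue at h1
      rwa [dif_pos e.2, dif_pos e.2] at h1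
    · funext t e
      have h1 := h' t e.1
      unfold hGlue at h1
      rwa [dif_neg e.2, dif_neg e.2] at h1
  · intro i
    refine ⟨(fun t e => i t e.1, fun t e => i t e.1), ?_⟩
    funext t e
    by_cases h : ∃ j ∈ H e, p j
    · simp [hGlue, h]
    · simp [hGlue, h]

end HyperFactor
section HyperRank

open scoped Classical

variable {k m : ℕ} {E : Type} [Fintype E] [DecidableEq E]

lemma boole_mul_boole (a b : Prop) [Decidable a] [Decidable b] :
    ((if a then (1:ℂ) else 0) * (if b then (1:ℂ) else 0)) = if a ∧ b then (1:ℂ) else 0 := by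
  by_cases ha : a <;> by_cases hb : b <;> simp [ha, hb]

lemma rank_flatMat_hyperGHZ_le (H : E → Finset (Fin k)) (p : Fin k → Prop) [DecidablePred p]
    (D : Finset E)
    (hD : ∀ e, (∃ j ∈ H e, p j) → (∃ j ∈ H e, ¬ p j) → e ∈ D) :
    (flatMat (α := fun _ => Fin m → E → Fin 2) p (statePow (hyperGHZ H 2) m)).rank
      ≤ 2 ^ (m * D.card) := by
  classical
  set M := flatMat (α := fun _ => Fin m → E → Fin 2) p (statePow (hyperGHZ H 2) m) with hMdef
  set F : Matrix ((j : {j : Fin k // p j}) → Fin m → E → Fin 2)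
      (Fin m → {e : E // e ∈ D} → Fin 2) ℂ :=
    fun u c => ∑ iL : Fin m → {e : E // ∃ j ∈ H e, p j} → Fin 2,
      if hCondP H p u (hGlue H p iL 0) ∧ hRestr H p D iL = c then 1 else 0 with hF
  set G : Matrix (Fin m → {e : E // e ∈ D} → Fin 2)
      ((j : {j : Fin k // ¬ p j}) → Fin m → E → Fin 2) ℂ :=
    fun c v => ∑ iR : Fin m → {e : E // ¬ ∃ j ∈ H e, p j} → Fin 2,
      if hCondP H (fun j => ¬ p j) v (hGlue H p (hLift H p D c) iR) then 1 else 0 with hG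
  have key : M = F * G := by
    ext u v
    rw [hMdef, flatMat_hyperGHZ_eq, Matrix.mul_apply]
    rw [← sum_hGlue H p, Fintype.sum_prod_type]
    -- LHS is now ∑ iL, ∑ iR, boole(condL (glue iL iR) ∧ condR (glue iL iR))
    -- RHS: ∑ c, F u c * G c v
    have rhs : ∀ c, F u c * G c v
        = ∑ iL : Fin m → {e : E // ∃ j ∈ H e, p j} → Fin 2,
            ∑ iR : Fin m → {e : E // ¬ ∃ j ∈ H e, p j} → Fin 2,
            if hRestr H p D iL = c then
              ((if hCondP H p u (hGlue H p iL 0) then (1:ℂ) else 0) *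
               (if hCondP H (fun j => ¬ p j) v (hGlue H p (hLift H p D c) iR) then (1:ℂ) else 0))
            else 0 := by
      intro c
      rw [hF, hG, Finset.sum_mul_sum]
      refine Finset.sum_congr rfl (fun iL _ => Finset.sum_congr rfl (fun iR _ => ?_))
      by_cases h1 : hCondP H p u (hGlue H p iL 0) <;>
        by_cases h2 : hRestr H p D iL = c <;>
        by_cases h3 : hCondP H (fun j => ¬ p j) v (hGlue H p (hLift H p D c) iR) <;>
        simp [h1, h2, h3]
    conv_rhs => rw [Finset.sum_congr rfl (fun c _ => rhs c)]
    conv_rhs => rw [Finset.sum_comm]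
    refine Finset.sum_congr rfl (fun iL _ => ?_)
    conv_rhs => rw [Finset.sum_comm]
    refine Finset.sum_congr rfl (fun iR _ => ?_)
    -- now ∑ c, if hRestr .. = c then ... else 0
    rw [Finset.sum_ite_eq Finset.univ (hRestr H p D iL)
      (fun c => (if hCondP H p u (hGlue H p iL 0) then (1:ℂ) else 0) *
        (if hCondP H (fun j => ¬ p j) v (hGlue H p (hLift H p D c) iR) then (1:ℂ) else 0))]
    rw [if_pos (Finset.mem_univ _)]
    have e1 : hCondP H p u (hGlue H p iL 0) ↔ hCondP H p u (hGlue H p iL iR) := by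
      refine hCondP_congr H p u (fun t e he => ?_)
      unfold hGlue
      rw [dif_pos he, dif_pos he]
    have e2 : hCondP H (fun j => ¬ p j) v (hGlue H p (hLift H p D (hRestr H p D iL)) iR)
        ↔ hCondP H (fun j => ¬ p j) v (hGlue H p iL iR) := by
      refine hCondP_congr H (fun j => ¬ p j) v (fun t e he => ?_)
      by_cases hLe : ∃ j ∈ H e, p j
      · have heD : e ∈ D := hD e hLe he
        unfold hGlue hLift hRestr
        rw [dif_pos hLe, dif_pos hLe, dif_pos heD, dif_pos hLe]
      · unfold hGlue
        rw [dif_neg hLe, dif_neg hLe]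
    rw [e1, e2, boole_mul_boole]
  rw [key]
  calc (F * G).rank ≤ F.rank := Matrix.rank_mul_le_left _ _
    _ ≤ Fintype.card (Fin m → {e : E // e ∈ D} → Fin 2) := Matrix.rank_le_card_width F
    _ = 2 ^ (m * D.card) := by
      rw [Fintype.card_fun, Fintype.card_fun, Fintype.card_coe, Fintype.card_fin,
        Fintype.card_fin, ← pow_mul, mul_comm]
end HyperRank
/-- Lower bound in the main theorem: for a connected hypergraph `H` on `[k]`,
`ω(GHZ^H_2, GHZ_2) ≥ 1/λ(H)`. -/
theorem ghzH_rate_ge {k : ℕ} {E : Type} [Fintype E] [DecidableEq E]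
    (H : E → Finset (Fin k)) (hconn : HConnected H) :
    AsympRateGE (hyperGHZ H 2) (ghzState k 2) ((edgeConn H : ℝ))⁻¹ := by
  classical
  intro ε hε
  refine Filter.Eventually.of_forall (fun n => ?_)
  intro m hm
  set l := edgeConn H with hl
  by_cases hcz : l = 0
  · have h0 : ((l : ℝ))⁻¹ = 0 := by rw [hcz]; simp
    rw [h0]
    nlinarith [hε, (Nat.cast_nonneg n : (0:ℝ) ≤ n), (Nat.cast_nonneg m : (0:ℝ) ≤ m)]
  · have hnot : ¬ HEdgeConnected H (l + 1) := by
      intro hcon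
      have hmem : (l + 1) ∈ {m | HEdgeConnected H m} := hcon
      by_cases hbdd : BddAbove {m | HEdgeConnected H m}
      · have hle : l + 1 ≤ edgeConn H := le_csSup hbdd hmem
        rw [← hl] at hle
        omega
      · have hinf : {m | HEdgeConnected H m}.Infinite := by
          by_contra hfin
          rw [Set.not_infinite] at hfin
          exact hbdd hfin.bddAbove
        have hz : edgeConn H = 0 := Set.Infinite.Nat.sSup_eq_zero hinf
        rw [← hl] at hz
        exact hcz hz
    obtain ⟨D, hDcard, hDdisc⟩ : ∃ D : Finset E, D.card < l + 1 ∧ ¬ HConnectedOn H {e | e ∉ D} := by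
      by_contra hno
      push_neg at hno
      exact hnot (fun D hD => hno D hD)
    rw [HConnectedOn] at hDdisc
    push_neg at hDdisc
    obtain ⟨a, b, hab⟩ := hDdisc
    set p : Fin k → Prop := fun j => Relation.ReflTransGen (HStep H {e | e ∉ D}) a j with hp
    have hpa : p a := Relation.ReflTransGen.refl
    have hpb : ¬ p b := hab
    have hcross : ∀ e, (∃ j ∈ H e, p j) → (∃ j ∈ H e, ¬ p j) → e ∈ D := by
      rintro e ⟨j1, hj1, hpj1⟩ ⟨j2, hj2, hpj2⟩
      by_contra heD
      exact hpj2 (Relation.ReflTransGen.tail hpj1 ⟨e, heD, hj1, hj2⟩)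
    have h1 := rank_flatMat_le_of_slocc (α := fun _ => Fin m → E → Fin 2)
      (β := fun _ => Fin n → Fin 2) p hm
    have h2 := rank_flatMat_hyperGHZ_le (m := m) H p D hcross
    have h3 := rank_flatMat_ghz_ge p hpa hpb n
    have hchain : 2 ^ n ≤ 2 ^ (m * D.card) := le_trans h3 (le_trans h1 h2)
    have hnm : n ≤ m * D.card := by
      have := (Nat.pow_le_pow_iff_right (by norm_num : 1 < 2)).mp hchain
      exact this
    have hDl : D.card ≤ l := by omega
    have hnml : n ≤ m * l := le_trans hnm (Nat.mul_le_mul_left m hDl)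
    have hl1 : 1 ≤ l := by omega
    have hlR : (0:ℝ) < l := by
      have : (1:ℝ) ≤ l := by exact_mod_cast hl1
      linarith
    have hmain : ((l:ℝ))⁻¹ * n ≤ m := by
      rw [inv_mul_le_iff₀ hlR]
      have : (n : ℝ) ≤ (m : ℝ) * (l : ℝ) := by exact_mod_cast hnml
      linarith
    nlinarith [mul_nonneg hε.le (Nat.cast_nonneg n : (0:ℝ) ≤ n)]
end

section
/- Let mamu = EPR_{AB} ⊗ EPR_{BC} ⊗ EPR_{AC} be the tripartite tensor consisting of three EPR pairs shared between parties AB, BC and AC, i.e., up to relabelling of local bases, mamu = Σ_{i_1,i_2,i_3=1}^{2} |i_1 i_2⟩_A |i_2 i_3⟩_B |i_3 i_1⟩_C, and let GHZ = |000⟩ + |111⟩. Then ω(mamu, GHZ) = 1/2. -/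
open Finset Filter

/-- The matrix multiplication tensor `mamu = EPR_{AB} ⊗ EPR_{BC} ⊗ EPR_{AC}`:
up to relabelling of local bases it is `Σ_{i₁,i₂,i₃} |i₁i₂⟩_A |i₂i₃⟩_B |i₃i₁⟩_C`
with indices ranging over a two-element set. -/
noncomputable def mamu : ((_ : Fin 3) → Fin 2 × Fin 2) → ℂ :=
  fun x => if (x 0).2 = (x 1).1 ∧ (x 1).2 = (x 2).1 ∧ (x 2).2 = (x 0).1 then 1 else 0


lemma fin3_forall {P : Fin 3 → Prop} : (∀ j, P j) ↔ P 0 ∧ P 1 ∧ P 2 :=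
  ⟨fun h => ⟨h 0, h 1, h 2⟩, fun ⟨a, b, c⟩ j => by fin_cases j <;> assumption⟩

lemma ghz_eval (v : Fin 3 → Fin 2) :
    ghzState 3 2 v = if v 0 = v 1 ∧ v 0 = v 2 then 1 else 0 := by
  unfold ghzState
  split_ifs with h
  · norm_cast
    rw [Finset.card_eq_one]
    refine ⟨v 0, ?_⟩
    ext i
    simp only [mem_filter, mem_univ, true_and, mem_singleton, fin3_forall]
    constructor
    · rintro ⟨h0, h1, h2⟩; exact h0.symm
    · rintro rfl; exact ⟨rfl, h.1.symm, h.2.symm⟩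
  · norm_cast
    rw [Finset.card_eq_zero]
    ext i
    simp only [mem_filter, mem_univ, true_and, Finset.notMem_empty, iff_false, fin3_forall]
    rintro ⟨h0, h1, h2⟩
    exact h ⟨h0.trans h1.symm, h0.trans h2.symm⟩

lemma ghz_pow_eval (n : ℕ) (y : Fin 3 → Fin n → Fin 2) :
    statePow (ghzState 3 2) n y = if y 0 = y 1 ∧ y 0 = y 2 then 1 else 0 := by
  unfold statePow
  simp only [ghz_eval]
  rw [Finset.prod_boole]
  congr 1
  simp only [eq_iff_iff]
  constructor
  · intro h
    exact ⟨funext fun t => (h t (mem_univ t)).1, funext fun t => (h t (mem_univ t)).2⟩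
  · rintro ⟨h1, h2⟩ t _
    exact ⟨congrFun h1 t, congrFun h2 t⟩

lemma mamu_pow_eval (m : ℕ) (x : Fin 3 → Fin m → Fin 2 × Fin 2) :
    statePow mamu m x =
      if (fun t => (x 0 t).2) = (fun t => (x 1 t).1) ∧
         (fun t => (x 1 t).2) = (fun t => (x 2 t).1) ∧
         (fun t => (x 2 t).2) = (fun t => (x 0 t).1) then 1 else 0 := by
  unfold statePow mamu
  rw [Finset.prod_boole]
  congr 1
  simp only [eq_iff_iff, funext_iff]
  constructor
  · intro h
    exact ⟨fun t => (h t (mem_univ t)).1, fun t => (h t (mem_univ t)).2.1,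
      fun t => (h t (mem_univ t)).2.2⟩
  · rintro ⟨h1, h2, h3⟩ t _
    exact ⟨h1 t, h2 t, h3 t⟩

def triEquiv {γ : Type} : (Fin 3 → γ) ≃ γ × γ × γ where
  toFun x := (x 0, x 1, x 2)
  invFun p := ![p.1, p.2.1, p.2.2]
  left_inv x := by funext j; fin_cases j <;> simp
  right_inv p := by simp

open Matrix in
lemma lower_aux {α β : Type} [Fintype α] [Fintype β] [DecidableEq β]
    (ψ : (Fin 3 → α) → ℂ) (φ : (Fin 3 → β) → ℂ)
    (h : SLOCCTo (α := fun _ => α) (β := fun _ => β) ψ φ)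
    (hφ : ∀ y : Fin 3 → β, φ y = if y 0 = y 1 ∧ y 0 = y 2 then 1 else 0) :
    Fintype.card β ≤ Fintype.card α := by
  obtain ⟨A, hA⟩ := h
  set Mψ : Matrix α (α × α) ℂ := fun a p => ψ ![a, p.1, p.2] with hMψ
  set Mφ : Matrix β (β × β) ℂ := fun b q => φ ![b, q.1, q.2] with hMφ
  set P : Matrix β α ℂ := fun b a => A 0 b a with hP
  set Q : Matrix (β × β) (α × α) ℂ := fun q p => A 1 q.1 p.1 * A 2 q.2 p.2 with hQ
  have key : Mφ = P * Mψ * Qᵀ := by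
    funext b q
    rw [Matrix.mul_apply]
    simp only [Matrix.mul_apply, Matrix.transpose_apply]
    have := hA ![b, q.1, q.2]
    rw [Fintype.sum_equiv triEquiv _
      (fun p => (∏ j : Fin 3, A j (![b, q.1, q.2] j) (![p.1, p.2.1, p.2.2] j)) *
        ψ ![p.1, p.2.1, p.2.2])] at this
    · rw [hMφ]
      simp only at this ⊢
      rw [this]
      simp only [Fintype.sum_prod_type, Finset.sum_mul]
      have hsw : (∑ x : α, ∑ y : α, ∑ i : α, P b i * Mψ i (x, y) * Q q (x, y))
          = ∑ i : α, ∑ x : α, ∑ y : α, P b i * Mψ i (x, y) * Q q (x, y) :=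
        Eq.trans (Finset.sum_congr rfl fun x _ => Finset.sum_comm)
          (Finset.sum_comm)
      rw [hsw]
      refine Finset.sum_congr rfl fun x1 _ => ?_
      refine Finset.sum_congr rfl fun x2 _ => ?_
      refine Finset.sum_congr rfl fun x3 _ => ?_
      simp only [Fin.prod_univ_three, hMψ, hP, hQ, Matrix.cons_val_zero,
        Matrix.cons_val_one, Matrix.head_cons, Matrix.cons_val_two, Matrix.tail_cons]
      ring
    · intro x
      have hx : ![(triEquiv x).1, (triEquiv x).2.1, (triEquiv x).2.2] = x :=
        triEquiv.left_inv x
      rw [hx]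
  have h1 : Mφ.rank ≤ Mψ.rank := by
    rw [key]
    exact le_trans (Matrix.rank_mul_le_left _ _) (Matrix.rank_mul_le_right _ _)
  have h2 : Mψ.rank ≤ Fintype.card α := Matrix.rank_le_card_height _
  have h3 : Fintype.card β ≤ Mφ.rank := by
    set E : Matrix (β × β) β ℂ := fun q b => if q = (b, b) then 1 else 0 with hE
    have hid : Mφ * E = 1 := by
      funext b b'
      rw [Matrix.mul_apply]
      rw [Finset.sum_eq_single (b', b')]
      · simp only [hMφ, hE, hφ, if_pos rfl, mul_one]
        simp [Matrix.one_apply, and_self, Matrix.cons_val_zero, Matrix.cons_val_one,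
          Matrix.head_cons]
      · intro q _ hq
        simp only [hE, if_neg hq, mul_zero]
      · intro hb; exact absurd (Finset.mem_univ _) hb
    calc Fintype.card β = (1 : Matrix β β ℂ).rank := (Matrix.rank_one).symm
      _ = (Mφ * E).rank := by rw [hid]
      _ ≤ Mφ.rank := Matrix.rank_mul_le_left _ _
  omega

lemma corner_embed (K : ℕ) (Y : Type) [Fintype Y] [DecidableEq Y]
    (hY : Fintype.card Y ≤ K * rothNumberNat K) :
    ∃ g1 g2 g3 : Y → ℕ,
      (∀ y, g1 y < 2 * K ∧ g2 y < K ∧ g3 y < 3 * K) ∧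
      ∀ s t u : Y, g1 u = g1 s → g2 s = g2 t → g3 t = g3 u → s = t ∧ s = u := by
  obtain ⟨S, hSsub, hScard, hSfree⟩ := rothNumberNat_spec K
  set T : Finset (ℕ × ℕ) := (S ×ˢ range K).image (fun p => (p.2 + p.1, p.2)) with hT
  have hTcard : T.card = rothNumberNat K * K := by
    rw [hT, Finset.card_image_of_injOn, Finset.card_product, hScard, Finset.card_range]
    intro p _ q _ h
    simp only [Prod.mk.injEq] at h
    obtain ⟨h1, h2⟩ := h
    exact Prod.ext (by omega) h2
  have hcard : Fintype.card Y ≤ Fintype.card {z // z ∈ T} := by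
    rw [Fintype.card_coe, hTcard, Nat.mul_comm]; exact hY
  obtain ⟨e⟩ := Function.Embedding.nonempty_of_card_le hcard
  have hmem : ∀ y : Y, ∃ c ∈ S, c < K ∧ (e y : ℕ × ℕ).2 < K ∧
      (e y : ℕ × ℕ).1 = (e y : ℕ × ℕ).2 + c := by
    intro y
    have := (e y).2
    simp only [hT, Finset.mem_image, Finset.mem_product, Finset.mem_range] at this
    obtain ⟨p, ⟨hpS, hpK⟩, hpe⟩ := this
    refine ⟨p.1, hpS, ?_, ?_, ?_⟩
    · exact Finset.mem_range.1 (hSsub hpS)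
    · rw [← hpe]; exact hpK
    · rw [← hpe]
  refine ⟨fun y => (e y : ℕ × ℕ).1, fun y => (e y : ℕ × ℕ).2,
    fun y => (e y : ℕ × ℕ).1 + (e y : ℕ × ℕ).2, ?_, ?_⟩
  · intro y
    dsimp only
    obtain ⟨c, hcS, hcK, hy2, hy1⟩ := hmem y
    omega
  · intro s t u h1 h2 h3
    dsimp only at h1 h2 h3
    obtain ⟨cs, hcsS, hcsK, hs2, hs1⟩ := hmem s
    obtain ⟨ct, hctS, hctK, ht2, ht1⟩ := hmem t
    obtain ⟨cu, hcuS, hcuK, hu2, hu1⟩ := hmem u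
    have hap : ct + cu = cs + cs := by omega
    have hct_cs : ct = cs := hSfree hctS hcsS hcuS hap
    have hpair_t : (e t : ℕ × ℕ) = (e s : ℕ × ℕ) := by
      apply Prod.ext <;> omega
    have hpair_u : (e u : ℕ × ℕ) = (e s : ℕ × ℕ) := by
      apply Prod.ext <;> omega
    have hts : e t = e s := Subtype.ext hpair_t
    have hus : e u = e s := Subtype.ext hpair_u
    exact ⟨(e.injective hts).symm, (e.injective hus).symm⟩

lemma behrend_numeric (ε : ℝ) (hε : 0 < ε) :
    ∀ᶠ n : ℕ in atTop, ∃ m : ℕ, 2 ≤ m ∧ (m : ℝ) ≤ (1/2 + ε) * n ∧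
      2^n ≤ 2^(m-2) * rothNumberNat (2^(m-2)) := by
  have hcast := tendsto_natCast_atTop_atTop (R := ℝ)
  filter_upwards [eventually_ge_atTop 1, hcast.eventually_ge_atTop ((7/ε)^2),
    hcast.eventually_ge_atTop (256 : ℝ)] with n hn1 hn2 hn3
  have hnn : (0:ℝ) ≤ (n:ℝ) := Nat.cast_nonneg n
  have hss : Real.sqrt n * Real.sqrt n = (n:ℝ) := Real.mul_self_sqrt hnn
  have hs1 : (1:ℝ) ≤ Real.sqrt n := by
    rw [show (1:ℝ) = Real.sqrt 1 from (Real.sqrt_one).symm]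
    exact Real.sqrt_le_sqrt (by exact_mod_cast hn1)
  have hs16 : (16:ℝ) ≤ Real.sqrt n := by
    rw [show (16:ℝ) = Real.sqrt 256 from by
      rw [show (256:ℝ) = 16^2 by norm_num, Real.sqrt_sq (by norm_num)]]
    exact Real.sqrt_le_sqrt hn3
  have hs7 : 7/ε ≤ Real.sqrt n := by
    rw [show 7/ε = Real.sqrt ((7/ε)^2) from
      (Real.sqrt_sq (by positivity)).symm]
    exact Real.sqrt_le_sqrt hn2
  set b : ℕ := ⌈3 * Real.sqrt n⌉₊ + 3 with hbdef
  have hbu : (b:ℝ) ≤ 3 * Real.sqrt n + 4 := by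
    rw [hbdef]
    push_cast
    have := (Nat.ceil_lt_add_one (by positivity : (0:ℝ) ≤ 3 * Real.sqrt n)).le
    linarith
  have hbl : 3 * Real.sqrt n + 3 ≤ (b:ℝ) := by
    rw [hbdef]; push_cast
    have := Nat.le_ceil (3 * Real.sqrt n)
    linarith
  have h2b : 2 * b ≤ n := by
    have : 2 * (b:ℝ) ≤ (n:ℝ) := by nlinarith
    exact_mod_cast this
  set m : ℕ := n / 2 + b with hmdef
  have hm2 : 2 ≤ m := by omega
  set M : ℕ := m - 2 with hMdef
  have hMn : M ≤ n := by omega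
  have h2M : (n:ℝ) + 2*(b:ℝ) - 5 ≤ 2*(M:ℝ) := by
    have h : n + 2*b ≤ 2*M + 5 := by omega
    have h' : (n:ℝ) + 2*(b:ℝ) ≤ 2*(M:ℝ) + 5 := by exact_mod_cast h
    linarith
  set K : ℕ := 2 ^ M with hKdef
  have hKcast : (K:ℝ) = 2 ^ M := by rw [hKdef]; push_cast; ring
  have hKexp : (K:ℝ) = Real.exp (M * Real.log 2) := by
    rw [hKcast, Real.exp_nat_mul, Real.exp_log two_pos]
  have hlog2u : Real.log 2 < 0.6931471808 := Real.log_two_lt_d9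
  have hlog2l : (0.6931471803:ℝ) < Real.log 2 := Real.log_two_gt_d9
  have hlogK : Real.log K = M * Real.log 2 := by
    rw [hKexp, Real.log_exp]
  have hlogK_le : Real.log K ≤ (n:ℝ) := by
    rw [hlogK]
    have hMc : (M:ℝ) ≤ (n:ℝ) := by exact_mod_cast hMn
    nlinarith [Nat.cast_nonneg (α := ℝ) M]
  have hsqK : Real.sqrt (Real.log K) ≤ Real.sqrt n := Real.sqrt_le_sqrt hlogK_le
  have hkey : (n:ℝ) * Real.log 2 ≤ M * Real.log 2 + M * Real.log 2 +
      (-4 * Real.sqrt (Real.log K)) := by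
    have h4 : 4 * Real.sqrt (Real.log K) ≤ 4 * Real.sqrt n := by linarith
    nlinarith [Real.sqrt_nonneg (n:ℝ)]
  refine ⟨m, hm2, ?_, ?_⟩
  · have h7 : 7 * Real.sqrt n ≤ ε * n := by
      have h := mul_le_mul_of_nonneg_right hs7 (Real.sqrt_nonneg (n:ℝ))
      rw [hss] at h
      calc 7 * Real.sqrt n = ε * (7/ε * Real.sqrt n) := by field_simp
        _ ≤ ε * n := mul_le_mul_of_nonneg_left h hε.le
    have hmc : (m:ℝ) ≤ (n:ℝ)/2 + (b:ℝ) := by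
      rw [hmdef]; push_cast
      have := Nat.cast_div_le (m := n) (n := 2) (α := ℝ)
      push_cast at this
      linarith
    nlinarith
  · have hroth := Behrend.roth_lower_bound (N := K)
    have hKpos : (0:ℝ) ≤ (K:ℝ) := Nat.cast_nonneg K
    have hchain : (2:ℝ)^n ≤ (K:ℝ) * ((K:ℝ) * Real.exp (-4 * Real.sqrt (Real.log K))) := by
      have h2n : (2:ℝ)^n = Real.exp (n * Real.log 2) := by
        rw [Real.exp_nat_mul, Real.exp_log two_pos]
      have hsq_eq : Real.sqrt (Real.log (Real.exp ((M:ℝ) * Real.log 2)))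
          = Real.sqrt (Real.log K) := by rw [Real.log_exp, ← hlogK]
      rw [h2n, hKexp, ← Real.exp_add, ← Real.exp_add]
      rw [hsq_eq]
      exact Real.exp_le_exp.2 (by linarith [hkey])
    have hfin : (2:ℝ)^n ≤ (K:ℝ) * (rothNumberNat K : ℝ) := by
      calc (2:ℝ)^n ≤ (K:ℝ) * ((K:ℝ) * Real.exp (-4 * Real.sqrt (Real.log K))) := hchain
        _ ≤ (K:ℝ) * (rothNumberNat K : ℝ) := mul_le_mul_of_nonneg_left hroth hKpos
    have : ((2^n : ℕ):ℝ) ≤ ((K * rothNumberNat K : ℕ):ℝ) := by push_cast; linarith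
    exact_mod_cast this

lemma slocc_exists (n m : ℕ) (hm2 : 2 ≤ m)
    (hcard : 2^n ≤ 2^(m-2) * rothNumberNat (2^(m-2))) :
    SLOCCTo (statePow mamu m) (statePow (ghzState 3 2) n) := by
  set K : ℕ := 2^(m-2) with hKdef
  have hYcard : Fintype.card (Fin n → Fin 2) ≤ K * rothNumberNat K := by
    simpa [Fintype.card_fun] using hcard
  obtain ⟨g1, g2, g3, hb, hprop⟩ := corner_embed K (Fin n → Fin 2) hYcard
  have hbound : ∀ y, g1 y < 2^m ∧ g2 y < 2^m ∧ g3 y < 2^m := by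
    intro y
    obtain ⟨hb1, hb2, hb3⟩ := hb y
    have hKm : 4 * K = 2^m := by
      rw [hKdef, show (4:ℕ) = 2^2 by norm_num, ← pow_add]
      congr 1
      omega
    omega
  set enc : Fin (2^m) → (Fin m → Fin 2) := ⇑(finFunctionFinEquiv.symm) with hencdef
  have henc_inj : Function.Injective enc := finFunctionFinEquiv.symm.injective
  set f1 : (Fin n → Fin 2) → (Fin m → Fin 2) := fun y => enc ⟨g1 y, (hbound y).1⟩ with hf1
  set f2 : (Fin n → Fin 2) → (Fin m → Fin 2) := fun y => enc ⟨g2 y, (hbound y).2.1⟩ with hf2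
  set f3 : (Fin n → Fin 2) → (Fin m → Fin 2) := fun y => enc ⟨g3 y, (hbound y).2.2⟩ with hf3
  have hf1i : ∀ s u, f1 u = f1 s → g1 u = g1 s := by
    intro s u h
    have := henc_inj h
    simpa using congrArg Fin.val this
  have hf2i : ∀ s t, f2 s = f2 t → g2 s = g2 t := by
    intro s t h
    have := henc_inj h
    simpa using congrArg Fin.val this
  have hf3i : ∀ t u, f3 t = f3 u → g3 t = g3 u := by
    intro t u h
    have := henc_inj h
    simpa using congrArg Fin.val this
  -- the local maps
  set c : Fin 3 → (Fin n → Fin 2) → (Fin m → Fin 2 × Fin 2) :=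
    ![fun y t => (f1 y t, f2 y t), fun y t => (f2 y t, f3 y t),
      fun y t => (f3 y t, f1 y t)] with hc
  refine ⟨fun j y x => if x = c j y then 1 else 0, ?_⟩
  intro y
  have hstep : ∀ x : (j : Fin 3) → Fin m → Fin 2 × Fin 2,
      (∏ j : Fin 3, if x j = c j (y j) then (1:ℂ) else 0) * statePow mamu m x
      = if x = (fun j => c j (y j)) then statePow mamu m x else 0 := by
    intro x
    rw [Finset.prod_boole]
    have : (∀ j ∈ Finset.univ, x j = c j (y j)) ↔ x = (fun j => c j (y j)) := by
      constructor
      · intro h; funext j; exact h j (mem_univ j)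
      · intro h j _; rw [h]
    by_cases h : x = (fun j => c j (y j))
    · rw [if_pos (this.2 h), if_pos h, one_mul]
    · rw [if_neg (fun hh => h (this.1 hh)), if_neg h, zero_mul]
  rw [Finset.sum_congr rfl (fun x _ => hstep x), Finset.sum_ite_eq' Finset.univ
    (fun j => c j (y j)) (fun x => statePow mamu m x), if_pos (mem_univ _)]
  rw [ghz_pow_eval, mamu_pow_eval]
  have hc0 : c 0 (y 0) = fun t => (f1 (y 0) t, f2 (y 0) t) := by rw [hc]; rfl
  have hc1 : c 1 (y 1) = fun t => (f2 (y 1) t, f3 (y 1) t) := by rw [hc]; rfl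
  have hc2 : c 2 (y 2) = fun t => (f3 (y 2) t, f1 (y 2) t) := by rw [hc]; rfl
  simp only [hc0, hc1, hc2]
  congr 1
  simp only [eq_iff_iff]
  constructor
  · rintro ⟨hy01, hy02⟩
    rw [← hy01, ← hy02]
    exact ⟨rfl, rfl, rfl⟩
  · rintro ⟨h1', h2', h3'⟩
    -- h1' : (fun t => f2 (y 0) t) = fun t => f2 (y 1) t  etc.
    have e2 : g2 (y 0) = g2 (y 1) := hf2i _ _ (by funext t; exact congrFun h1' t)
    have e3 : g3 (y 1) = g3 (y 2) := hf3i _ _ (by funext t; exact congrFun h2' t)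
    have e1 : g1 (y 2) = g1 (y 0) := hf1i _ _ (by funext t; exact congrFun h3' t)
    obtain ⟨hst, hsu⟩ := hprop (y 0) (y 1) (y 2) e1 e2 e3
    exact ⟨hst, hsu⟩


/-- **(Strassen.)** The asymptotic SLOCC rate for converting triples of EPR pairs
shared between parties AB, BC, AC into GHZ states is `ω(mamu, GHZ) = 1/2`. -/
theorem mamu_to_ghz_rate : AsympRateEq mamu (ghzState 3 2) (1 / 2 : ℝ) := by
  constructor
  · intro ε hε
    filter_upwards [behrend_numeric ε hε] with n hn
    obtain ⟨m, hm2, hmle, hcard⟩ := hn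
    exact ⟨m, slocc_exists n m hm2 hcard, hmle⟩
  · intro ε hε
    refine Eventually.of_forall (fun n m h => ?_)
    have hcard : Fintype.card (Fin n → Fin 2) ≤ Fintype.card (Fin m → Fin 2 × Fin 2) :=
      lower_aux (statePow mamu m) (statePow (ghzState 3 2) n) h (ghz_pow_eval n)
    have h2n : (2:ℕ)^n ≤ 2^(2*m) := by
      have : (2:ℕ)^n ≤ 4^m := by simpa [Fintype.card_fun] using hcard
      calc (2:ℕ)^n ≤ 4^m := this
        _ = 2^(2*m) := by rw [pow_mul]; norm_num
    have hnm : n ≤ 2*m := (Nat.pow_le_pow_iff_right (by norm_num)).1 h2n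
    have hnm' : (n:ℝ) ≤ 2*(m:ℝ) := by exact_mod_cast hnm
    have hεn : 0 ≤ ε * n := mul_nonneg hε.le (Nat.cast_nonneg n)
    nlinarith
end

section
/- For every N ≥ 1 and every g ∈ ℤ, the tripartite tensor Σ_{i_1,i_2,i_3=1}^{N} |i_1 i_2⟩_A |i_2 i_3⟩_B |i_3 i_1⟩_C degenerates to the tensor Σ over those 1 ≤ i_1,i_2,i_3 ≤ N with i_1 + i_2 + i_3 = g of |i_1 i_2⟩_A |i_2 i_3⟩_B |i_3 i_1⟩_C. -/
open Finset Filter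

/-- Degeneration `ψ ⊵ φ`: there are local transformations `A j (ε)` whose matrix entries
are Laurent polynomials in `ε` such that `(A 1 (ε) ⊗ ⋯ ⊗ A k (ε)) ψ = φ + O(ε)` as
`ε → 0`; i.e. each coefficient of the transformed state, as a Laurent polynomial in
`ε = T`, equals the corresponding coefficient of `φ` plus `ε` times a polynomial. -/
def Degenerates {k : ℕ} {α β : Fin k → Type} [∀ j, Fintype (α j)]
    (ψ : ((j : Fin k) → α j) → ℂ) (φ : ((j : Fin k) → β j) → ℂ) : Prop :=
  ∃ A : (j : Fin k) → β j → α j → LaurentPolynomial ℂ,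
    ∀ y : (j : Fin k) → β j, ∃ p : Polynomial ℂ,
      (∑ x : (j : Fin k) → α j, (∏ j : Fin k, A j (y j) (x j)) * LaurentPolynomial.C (ψ x))
        = LaurentPolynomial.C (φ y) + LaurentPolynomial.T 1 * p.toLaurent

/-- For every `N ≥ 1` and every `g ∈ ℤ`, the tensor
`Σ_{i₁,i₂,i₃=1}^{N} |i₁i₂⟩_A |i₂i₃⟩_B |i₃i₁⟩_C` degenerates to the sum of those terms
with `i₁ + i₂ + i₃ = g` (indices taking the values `1,…,N`). -/
theorem matrixmult_degenerates (N : ℕ) (hN : 1 ≤ N) (g : ℤ) :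
    Degenerates
      (fun x : (_ : Fin 3) → Fin N × Fin N =>
        if (x 0).2 = (x 1).1 ∧ (x 1).2 = (x 2).1 ∧ (x 2).2 = (x 0).1 then (1 : ℂ) else 0)
      (fun x : (_ : Fin 3) → Fin N × Fin N =>
        if ((x 0).2 = (x 1).1 ∧ (x 1).2 = (x 2).1 ∧ (x 2).2 = (x 0).1) ∧
            ((((x 0).1 : ℕ) : ℤ) + 1) + ((((x 0).2 : ℕ) : ℤ) + 1)
              + ((((x 1).2 : ℕ) : ℤ) + 1) = g
          then (1 : ℂ) else 0) := by
  classical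
  set e : Fin 3 → Fin N × Fin N → ℤ := fun j y =>
    if j = 0 then (((y.1:ℕ):ℤ)+1)^2 + 2*(((y.1:ℕ):ℤ)+1)*(((y.2:ℕ):ℤ)+1)
    else if j = 1 then (((y.1:ℕ):ℤ)+1)^2 + 2*(((y.1:ℕ):ℤ)+1)*((((y.2:ℕ):ℤ)+1) - g)
    else ((((y.1:ℕ):ℤ)+1) - g)^2 + 2*((((y.1:ℕ):ℤ)+1) - g)*(((y.2:ℕ):ℤ)+1) with he
  refine ⟨fun j yj xj => if xj = yj then LaurentPolynomial.T (e j yj) else 0, fun y => ?_⟩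
  have hsum : (∑ x : (_ : Fin 3) → Fin N × Fin N,
      (∏ j : Fin 3, if x j = y j then LaurentPolynomial.T (e j (y j)) else 0) *
        LaurentPolynomial.C
          (if (x 0).2 = (x 1).1 ∧ (x 1).2 = (x 2).1 ∧ (x 2).2 = (x 0).1 then (1:ℂ) else 0))
      = LaurentPolynomial.T (e 0 (y 0) + e 1 (y 1) + e 2 (y 2)) *
        LaurentPolynomial.C
          (if (y 0).2 = (y 1).1 ∧ (y 1).2 = (y 2).1 ∧ (y 2).2 = (y 0).1 then (1:ℂ) else 0) := by
    rw [Fintype.sum_eq_single y]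
    · rw [show (∏ j : Fin 3, if y j = y j then LaurentPolynomial.T (e j (y j)) else 0)
          = ∏ j : Fin 3, LaurentPolynomial.T (e j (y j)) from
        Finset.prod_congr rfl (fun j _ => if_pos rfl), Fin.prod_univ_three,
        ← LaurentPolynomial.T_add, ← LaurentPolynomial.T_add]
    · intro x hx
      obtain ⟨j, hj⟩ : ∃ j, x j ≠ y j := by
        by_contra h; push_neg at h; exact hx (funext h)
      have hz : (fun j' : Fin 3 => if x j' = y j' then LaurentPolynomial.T (e j' (y j')) else (0 : LaurentPolynomial ℂ)) j
          = 0 := if_neg hj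
      exact mul_eq_zero_of_left (Finset.prod_eq_zero (Finset.mem_univ j) hz) _
  by_cases hm : (y 0).2 = (y 1).1 ∧ (y 1).2 = (y 2).1 ∧ (y 2).2 = (y 0).1
  · set i1 : ℤ := ((((y 0).1 : ℕ)) : ℤ) + 1
    set i2 : ℤ := ((((y 0).2 : ℕ)) : ℤ) + 1
    set i3 : ℤ := ((((y 1).2 : ℕ)) : ℤ) + 1
    have hE : e 0 (y 0) + e 1 (y 1) + e 2 (y 2) = (i1 + i2 + i3 - g)^2 := by
      simp only [he, hm.1, hm.2.1, hm.2.2]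
      obtain ⟨h1, h2, h3⟩ := hm
      simp only [← h1, ← h2, ← h3]
      have : (1 : Fin 3) ≠ 0 := by decide
      have h2' : (2 : Fin 3) ≠ 0 := by decide
      have h21 : (2 : Fin 3) ≠ 1 := by decide
      simp [this, h2', h21, i1, i2, i3, h1, h2, h3]
      ring
    set s : ℤ := i1 + i2 + i3 - g with hs
    by_cases hg : i1 + i2 + i3 = g
    · refine ⟨0, ?_⟩
      simp only [hsum, hE]
      have : s = 0 := by omega
      rw [show (i1+i2+i3-g)^2 = 0 by rw [← hs, this]; ring]
      have hc : ((((y 0).1:ℕ):ℤ) + 1) + ((((y 1).1:ℕ):ℤ) + 1) + ((((y 2).1:ℕ):ℤ) + 1) = g := by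
        rw [← hm.1, ← hm.2.1]; omega
      simp [hm, hc, LaurentPolynomial.T_zero]
    · refine ⟨Polynomial.X ^ (s^2 - 1).toNat, ?_⟩
      have hspos : 0 < s^2 := by
        have : s ≠ 0 := by omega
        positivity
      simp only [hsum, hE, ← hs]
      rw [Polynomial.toLaurent_X_pow, ← LaurentPolynomial.T_add]
      have : 1 + ((s^2 - 1).toNat : ℤ) = s^2 := by omega
      rw [this]
      have hc : ¬(((((y 0).1:ℕ):ℤ) + 1) + ((((y 1).1:ℕ):ℤ) + 1) + ((((y 2).1:ℕ):ℤ) + 1) = g) := by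
        rw [← hm.1, ← hm.2.1]; omega
      simp [hm, hc]
  · refine ⟨0, ?_⟩
    simp only [hsum]
    simp [hm]
end

section
/- Let 2 ≤ l ≤ k and let K_k^l be the complete l-uniform hypergraph on [k], i.e., the hypergraph whose edges are exactly the l-element subsets of [k], each with multiplicity one. Then ω(GHZ^{K_k^l}_2, GHZ_2) = 1/binom(k−1, l−1). -/
open Finset Filter

section Aux



abbrev KEdge (k l : ℕ) := {s : Finset (Fin k) // s.card = l}

def starEquiv (hl1 : 1 ≤ l) (j : Fin k) :
    {e : KEdge k l // j ∈ e.val} ≃ {s // s ∈ Finset.powersetCard (l-1) (Finset.univ.erase j)} where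
  toFun e := ⟨e.1.1.erase j, by
    rw [Finset.mem_powersetCard]
    refine ⟨fun x hx => ?_, ?_⟩
    · rcases Finset.mem_erase.mp hx with ⟨hxj, _⟩
      exact Finset.mem_erase.mpr ⟨hxj, Finset.mem_univ _⟩
    · rw [Finset.card_erase_of_mem e.2, e.1.2]⟩
  invFun s := ⟨⟨insert j s.1, by
      rcases Finset.mem_powersetCard.mp s.2 with ⟨hsub, hcard⟩
      have hj : j ∉ s.1 := fun h => (Finset.mem_erase.mp (hsub h)).1 rfl
      rw [Finset.card_insert_of_notMem hj, hcard]
      omega⟩, Finset.mem_insert_self _ _⟩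
  left_inv e := Subtype.ext (Subtype.ext (Finset.insert_erase e.2))
  right_inv s := by
    refine Subtype.ext ?_
    rcases Finset.mem_powersetCard.mp s.2 with ⟨hsub, hcard⟩
    have hj : j ∉ s.1 := fun h => (Finset.mem_erase.mp (hsub h)).1 rfl
    exact Finset.erase_insert hj

lemma card_star (hl1 : 1 ≤ l) (j : Fin k) :
    Fintype.card {e : KEdge k l // j ∈ e.val} = (k-1).choose (l-1) := by
  rw [Fintype.card_congr (starEquiv hl1 j), Fintype.card_coe, Finset.card_powersetCard,
    Finset.card_erase_of_mem (Finset.mem_univ _), Finset.card_univ, Fintype.card_fin]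

variable {k l : ℕ}


/-- party-j pattern produced by an index assignment `I`. -/
def pat (j : Fin k) {m : ℕ} (I : Fin m → KEdge k l → Fin 2) : Fin m → KEdge k l → Fin 2 :=
  fun t e => if j ∈ e.val then I t e else 0

lemma hyperPow_eq {m : ℕ} (x : (j : Fin k) → Fin m → KEdge k l → Fin 2) :
    statePow (hyperGHZ (fun e : KEdge k l => e.val) 2) m x
      = ∑ I : Fin m → KEdge k l → Fin 2,
          ∏ j : Fin k, (if x j = pat j I then (1:ℂ) else 0) := by
  classical
  set S : Fin m → Finset (KEdge k l → Fin 2) := fun t =>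
    Finset.univ.filter (fun i => ∀ j : Fin k, ∀ e : KEdge k l,
      ((x j t e : ℕ) = if j ∈ e.val then (i e : ℕ) else 0)) with hS
  have h1 : statePow (hyperGHZ (fun e : KEdge k l => e.val) 2) m x
      = ((Fintype.piFinset S).card : ℂ) := by
    rw [Fintype.card_piFinset]
    push_cast
    rfl
  rw [h1]
  have h2 : Fintype.piFinset S
      = Finset.univ.filter (fun I : Fin m → KEdge k l → Fin 2 => ∀ t, I t ∈ S t) := by
    ext I; simp [Fintype.mem_piFinset]
  rw [h2, Finset.card_filter]
  push_cast
  refine Finset.sum_congr rfl (fun I _ => ?_)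
  by_cases h : ∀ j, x j = pat j I
  · have h' : ∀ t, I t ∈ S t := by
      intro t
      rw [hS]
      simp only [Finset.mem_filter, Finset.mem_univ, true_and]
      intro j e
      rw [congrFun (congrFun (h j) t) e]
      unfold pat
      split <;> simp
    rw [if_pos h', Finset.prod_eq_one (fun j _ => if_pos (h j))]
  · push_neg at h
    obtain ⟨j, hj⟩ := h
    have h' : ¬ (∀ t, I t ∈ S t) := by
      intro hc
      apply hj
      funext t e
      have := (Finset.mem_filter.mp (hc t)).2 j e
      unfold pat
      by_cases hcase : j ∈ e.val
      · rw [if_pos hcase] at this; rw [if_pos hcase]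
        exact Fin.val_injective this
      · rw [if_neg hcase] at this; rw [if_neg hcase]
        exact Fin.val_injective this
    rw [if_neg h']
    exact (Finset.prod_eq_zero (Finset.mem_univ j) (if_neg hj : (if x j = pat j I then (1:ℂ) else 0) = 0)).symm

lemma slocc_expand {m n : ℕ}
    (A : (j : Fin k) → (Fin n → Fin 2) → (Fin m → KEdge k l → Fin 2) → ℂ)
    (hA : ∀ y, statePow (ghzState k 2) n y
      = ∑ x : (j : Fin k) → Fin m → KEdge k l → Fin 2,
          (∏ j : Fin k, A j (y j) (x j)) * statePow (hyperGHZ (fun e : KEdge k l => e.val) 2) m x)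
    (y : (j : Fin k) → Fin n → Fin 2) :
    statePow (ghzState k 2) n y
      = ∑ I : Fin m → KEdge k l → Fin 2, ∏ j : Fin k, A j (y j) (pat j I) := by
  classical
  rw [hA]
  have h1 : ∀ x : (j : Fin k) → Fin m → KEdge k l → Fin 2,
      (∏ j : Fin k, A j (y j) (x j)) * statePow (hyperGHZ (fun e : KEdge k l => e.val) 2) m x
      = ∑ I : Fin m → KEdge k l → Fin 2,
          ∏ j : Fin k, (A j (y j) (x j) * if x j = pat j I then (1:ℂ) else 0) := by
    intro x
    rw [hyperPow_eq, Finset.mul_sum]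
    refine Finset.sum_congr rfl (fun I _ => ?_)
    rw [← Finset.prod_mul_distrib]
  simp_rw [h1]
  rw [Finset.sum_comm]
  refine Finset.sum_congr rfl (fun I _ => ?_)
  have h2 : ∀ j : Fin k, ∀ v : Fin m → KEdge k l → Fin 2,
      A j (y j) v * (if v = pat j I then (1:ℂ) else 0)
      = if v = pat j I then A j (y j) v else 0 := by
    intro j v; split <;> simp
  calc ∑ x : (j : Fin k) → Fin m → KEdge k l → Fin 2,
        ∏ j : Fin k, (A j (y j) (x j) * if x j = pat j I then (1:ℂ) else 0)
      = ∏ j : Fin k, ∑ v : Fin m → KEdge k l → Fin 2,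
          (A j (y j) v * if v = pat j I then (1:ℂ) else 0) := by
        rw [Finset.prod_univ_sum]
        exact Finset.sum_congr (by simp [Fintype.piFinset_univ]) (fun x _ => rfl)
    _ = ∏ j : Fin k, A j (y j) (pat j I) := by
        refine Finset.prod_congr rfl (fun j _ => ?_)
        simp_rw [h2 j]
        rw [Finset.sum_ite_eq' Finset.univ (pat j I) (fun v => A j (y j) v)]
        simp

lemma exists_ne_of_two_le (hk : 2 ≤ k) (j0 : Fin k) : ∃ j1 : Fin k, j1 ≠ j0 := by
  by_cases h0 : j0 = ⟨0, by omega⟩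
  · refine ⟨⟨1, by omega⟩, ?_⟩
    rw [h0]; intro hc
    exact absurd (congrArg Fin.val hc) (by simp)
  · exact ⟨⟨0, by omega⟩, fun hc => h0 (hc ▸ rfl)⟩

lemma ghzPow_delta {n : ℕ} (hk : 2 ≤ k) (j0 : Fin k) (b ζ : Fin n → Fin 2) :
    statePow (ghzState k 2) n (fun j => if j = j0 then ζ else b)
      = if ζ = b then 1 else 0 := by
  classical
  unfold statePow ghzState
  split_ifs with hzb
  · subst hzb
    refine Finset.prod_eq_one (fun t _ => ?_)
    have : Finset.univ.filter
        (fun i : Fin 2 => ∀ j : Fin k, (if j = j0 then ζ else ζ) t = i) = {ζ t} := by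
      ext i
      simp only [Finset.mem_filter, Finset.mem_univ, true_and, Finset.mem_singleton]
      constructor
      · intro h
        have := h j0
        simp at this
        exact this.symm
      · intro h j
        subst h; split <;> rfl
    rw [this]
    simp
  · have hne : ∃ t, ζ t ≠ b t := Function.ne_iff.mp hzb
    obtain ⟨t0, ht0⟩ := hne
    refine Finset.prod_eq_zero (Finset.mem_univ t0) ?_
    have : Finset.univ.filter
        (fun i : Fin 2 => ∀ j : Fin k, (if j = j0 then ζ else b) t0 = i) = ∅ := by
      ext i
      simp only [Finset.mem_filter, Finset.mem_univ, true_and, Finset.notMem_empty,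
        iff_false]
      intro h
      obtain ⟨j1, hj1⟩ := exists_ne_of_two_le hk j0
      have h1 := h j0
      have h2 := h j1
      rw [if_pos rfl] at h1
      rw [if_neg hj1] at h2
      exact ht0 (h1.trans h2.symm)
    rw [this]
    simp


lemma ge_key (hk : 2 ≤ k) (hl1 : 1 ≤ l) {m n : ℕ}
    (h : SLOCCTo (statePow (hyperGHZ (fun e : KEdge k l => e.val) 2) m)
      (statePow (ghzState k 2) n)) :
    n ≤ (k-1).choose (l-1) * m := by
  classical
  obtain ⟨A, hA⟩ := h
  have hk0 : 0 < k := by omega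
  set j0 : Fin k := ⟨0, hk0⟩ with hj0
  let Star := {e : KEdge k l // j0 ∈ e.val}
  let Z := Fin m → Star → Fin 2
  let p0 : Z → (Fin m → KEdge k l → Fin 2) :=
    fun z t e => if h : j0 ∈ e.val then z t ⟨e, h⟩ else 0
  let f : Z → ((Fin n → Fin 2) → ℂ) := fun z ζ => A j0 ζ (p0 z)
  let Sp := Submodule.span ℂ (Set.range f)
  let res : (Fin m → KEdge k l → Fin 2) → Z := fun I t e => I t e.1
  have hp0 : ∀ I, pat j0 I = p0 (res I) := by
    intro I; funext t e
    by_cases hc : j0 ∈ e.val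
    · simp [pat, p0, res, hc]
    · simp [pat, p0, res, hc]
  have hdelta : ∀ b : Fin n → Fin 2, (Pi.single b (1:ℂ) : (Fin n → Fin 2) → ℂ) ∈ Sp := by
    intro b
    have heq : (Pi.single b (1:ℂ) : (Fin n → Fin 2) → ℂ)
        = ∑ I : Fin m → KEdge k l → Fin 2,
            (∏ j ∈ Finset.univ.erase j0, A j b (pat j I)) • f (res I) := by
      funext ζ
      rw [Finset.sum_apply]
      have h1 : (Pi.single b (1:ℂ) : (Fin n → Fin 2) → ℂ) ζ
          = statePow (ghzState k 2) n (fun j => if j = j0 then ζ else b) := by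
        rw [ghzPow_delta hk j0 b ζ, Pi.single_apply]
      rw [h1, slocc_expand A hA]
      refine Finset.sum_congr rfl (fun I _ => ?_)
      have e1 : A j0 (if j0 = j0 then ζ else b) (pat j0 I) = f (res I) ζ := by
        rw [if_pos rfl, hp0 I]
      have e2 : ∏ j ∈ Finset.univ.erase j0, A j (if j = j0 then ζ else b) (pat j I)
          = ∏ j ∈ Finset.univ.erase j0, A j b (pat j I) :=
        Finset.prod_congr rfl (fun j hj => by rw [if_neg (Finset.ne_of_mem_erase hj)])
      rw [Pi.smul_apply, smul_eq_mul,
        ← Finset.mul_prod_erase Finset.univ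
          (fun j => A j (if j = j0 then ζ else b) (pat j I)) (Finset.mem_univ j0),
        e1, e2, mul_comm]
    rw [heq]
    exact Submodule.sum_mem _ (fun I _ =>
      Submodule.smul_mem _ _ (Submodule.subset_span ⟨res I, rfl⟩))
  have hli : LinearIndependent ℂ
      (fun b : Fin n → Fin 2 => (Pi.single b (1:ℂ) : (Fin n → Fin 2) → ℂ)) := by
    refine Fintype.linearIndependent_iff.mpr (fun g hg b => ?_)
    have := congrFun hg b
    simpa [Finset.sum_apply, Pi.single_apply] using this
  have hcard1 : Fintype.card (Fin n → Fin 2) ≤ Module.finrank ℂ Sp := by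
    have hli2 : LinearIndependent ℂ
        (fun b : Fin n → Fin 2 => (⟨Pi.single b 1, hdelta b⟩ : Sp)) := by
      apply LinearIndependent.of_comp Sp.subtype
      exact hli
    exact hli2.fintype_card_le_finrank
  have hcard2 : Module.finrank ℂ Sp ≤ Fintype.card Z := by
    refine le_trans (finrank_span_le_card (Set.range f)) ?_
    rw [Set.toFinset_range]
    exact le_trans (Finset.card_image_le) (by simp)
  have hZ : Fintype.card Z = 2 ^ ((k-1).choose (l-1) * m) := by
    show Fintype.card (Fin m → Star → Fin 2) = _
    rw [Fintype.card_fun, Fintype.card_fun, Fintype.card_fin, Fintype.card_fin,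
      card_star hl1 j0, ← pow_mul]
  have hN : Fintype.card (Fin n → Fin 2) = 2 ^ n := by
    rw [Fintype.card_fun, Fintype.card_fin, Fintype.card_fin]
  have := le_trans hcard1 hcard2
  rw [hN, hZ] at this
  exact (Nat.pow_le_pow_iff_right (by omega)).mp this

abbrev SEdge (k l : ℕ) (v : Fin k) := {e : KEdge k l // v ∈ e.val}
abbrev NEdge (k l : ℕ) (v : Fin k) := {e : KEdge k l // v ∉ e.val}

/-- the star edge `f \ w ∪ {v}` for `w ∈ f`, `v ∉ f`. -/
def sEdge {k l : ℕ} (v : Fin k) (f : NEdge k l v) (w : Fin k) (hw : w ∈ f.1.val) :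
    SEdge k l v :=
  ⟨⟨insert v (f.1.val.erase w), by
      rw [Finset.card_insert_of_notMem (fun hc => f.2 (Finset.mem_of_mem_erase hc)),
        Finset.card_erase_of_mem hw, f.1.2]
      have h1 : 1 ≤ f.1.val.card := Finset.card_pos.mpr ⟨w, hw⟩
      rw [f.1.2] at h1
      omega⟩,
    Finset.mem_insert_self _ _⟩

/-- the diagonal tensor value at edge `e` given star-parameters `x`. -/
def Dmap {k l M : ℕ} (v : Fin k) (x : SEdge k l v → ZMod M) (e : KEdge k l) : ZMod M :=
  if h : v ∈ e.val then x ⟨e, h⟩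
  else ∑ w ∈ e.val.attach, x (sEdge v ⟨e, h⟩ w.1 w.2)

lemma nedge_nonempty {k l : ℕ} (v : Fin k) (hl1 : 1 ≤ l) (f : NEdge k l v) :
    f.1.val.Nonempty :=
  Finset.card_pos.mp (by rw [f.1.2]; omega)

def jone {k l : ℕ} (v : Fin k) (hl1 : 1 ≤ l) (f : NEdge k l v) : Fin k :=
  f.1.val.min' (nedge_nonempty v hl1 f)

lemma jone_mem {k l : ℕ} (v : Fin k) (hl1 : 1 ≤ l) (f : NEdge k l v) :
    jone v hl1 f ∈ f.1.val := Finset.min'_mem _ _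

def jtwo {k l : ℕ} (v : Fin k) (hl1 : 1 ≤ l) (hl2 : 2 ≤ l) (f : NEdge k l v) : Fin k :=
  (f.1.val.erase (jone v hl1 f)).min' (Finset.card_pos.mp (by
    rw [Finset.card_erase_of_mem (jone_mem v hl1 f), f.1.2]; omega))

lemma jtwo_mem {k l : ℕ} (v : Fin k) (hl1 : 1 ≤ l) (hl2 : 2 ≤ l) (f : NEdge k l v) :
    jtwo v hl1 hl2 f ∈ f.1.val.erase (jone v hl1 f) := Finset.min'_mem _ _

lemma jtwo_mem' {k l : ℕ} (v : Fin k) (hl1 : 1 ≤ l) (hl2 : 2 ≤ l) (f : NEdge k l v) :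
    jtwo v hl1 hl2 f ∈ f.1.val :=
  Finset.mem_of_mem_erase (jtwo_mem v hl1 hl2 f)

lemma jone_ne_jtwo {k l : ℕ} (v : Fin k) (hl1 : 1 ≤ l) (hl2 : 2 ≤ l) (f : NEdge k l v) :
    jone v hl1 f ≠ jtwo v hl1 hl2 f :=
  fun h => (Finset.mem_erase.mp (jtwo_mem v hl1 hl2 f)).1 h.symm

/-- the linear functional attached to a non-star edge `f`. -/
def phiF {k l M : ℕ} (v : Fin k) (hl1 : 1 ≤ l) (hl2 : 2 ≤ l)
    (x : SEdge k l v → ZMod M) (f : NEdge k l v) : ZMod M :=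
  x (sEdge v f (jone v hl1 f) (jone_mem v hl1 f))
    + 2 * x (sEdge v f (jtwo v hl1 hl2 f) (jtwo_mem' v hl1 hl2 f))

lemma key_comb {k l M : ℕ} (v : Fin k) (hl1 : 1 ≤ l) (hl2 : 2 ≤ l) {B : ℕ} (hBM : 2 * B ≤ M)
    (A0 : Finset ℕ) (hA0lt : ∀ a ∈ A0, a < B) (hAP : ThreeAPFree (A0 : Set ℕ))
    (c : NEdge k l v → ZMod M)
    (y : Fin k → (SEdge k l v → ZMod M))
    (hW : ∀ j f, ∃ a ∈ A0, phiF v hl1 hl2 (y j) f = c f + (a : ZMod M))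
    (hcons : ∀ (e : KEdge k l) (j j' : Fin k), j ∈ e.val → j' ∈ e.val →
      Dmap v (y j) e = Dmap v (y j') e) :
    ∀ j, y j = y v := by
  classical
  -- F1 : agreement on visible star coordinates
  have F1 : ∀ (j : Fin k) (E : SEdge k l v), j ∈ E.1.val → y j E = y v E := by
    intro j E hj
    have h := hcons E.1 j v hj E.2
    rw [Dmap, dif_pos E.2, Dmap, dif_pos E.2] at h
    simpa using h
  have F1' : ∀ (j : Fin k) (E : SEdge k l v), j ∈ E.1.val → y j E - y v E = 0 := by
    intro j E hj; rw [F1 j E hj, sub_self]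
  -- F3' : difference of Dmap values at a non-star edge
  have F3' : ∀ (f : NEdge k l v) (j : Fin k) (hj : j ∈ f.1.val),
      y j (sEdge v f j hj) - y v (sEdge v f j hj)
        = Dmap v (y j) f.1 - Dmap v (y v) f.1 := by
    intro f j hj
    rw [Dmap, dif_neg f.2, Dmap, dif_neg f.2, ← Finset.sum_sub_distrib]
    exact (Finset.sum_eq_single_of_mem ⟨j, hj⟩ (Finset.mem_attach _ _)
      (fun w _ hwne => F1' j (sEdge v f w.1 w.2) (Finset.mem_insert_of_mem
        (Finset.mem_erase.mpr ⟨fun h => hwne (Subtype.ext h.symm), hj⟩)))).symm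
  set t : NEdge k l v → ZMod M := fun f =>
    Dmap v (y (jone v hl1 f)) f.1 - Dmap v (y v) f.1 with ht
  have F3 : ∀ (f : NEdge k l v) (j : Fin k) (hj : j ∈ f.1.val),
      y j (sEdge v f j hj) - y v (sEdge v f j hj) = t f := by
    intro f j hj
    rw [F3' f j hj, ht, hcons f.1 j (jone v hl1 f) hj (jone_mem v hl1 f)]
  -- F4 : all t f vanish, by 3AP-freeness
  have F4 : ∀ f : NEdge k l v, t f = 0 := by
    intro f
    obtain ⟨a1, ha1, e1⟩ := hW v f
    obtain ⟨a2, ha2, e2⟩ := hW (jone v hl1 f) f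
    obtain ⟨a3, ha3, e3⟩ := hW (jtwo v hl1 hl2 f) f
    have hj1S2 : jone v hl1 f ∈ (sEdge v f (jtwo v hl1 hl2 f) (jtwo_mem' v hl1 hl2 f)).1.val :=
      Finset.mem_insert_of_mem (Finset.mem_erase.mpr
        ⟨jone_ne_jtwo v hl1 hl2 f, jone_mem v hl1 f⟩)
    have hj2S1 : jtwo v hl1 hl2 f ∈ (sEdge v f (jone v hl1 f) (jone_mem v hl1 f)).1.val :=
      Finset.mem_insert_of_mem (Finset.mem_erase.mpr
        ⟨(jone_ne_jtwo v hl1 hl2 f).symm, jtwo_mem' v hl1 hl2 f⟩)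
    have d1 : phiF v hl1 hl2 (y (jone v hl1 f)) f - phiF v hl1 hl2 (y v) f = t f := by
      have u1 := F3 f (jone v hl1 f) (jone_mem v hl1 f)
      have u2 := F1' (jone v hl1 f) _ hj1S2
      rw [phiF, phiF]
      linear_combination u1 + 2 * u2
    have d2 : phiF v hl1 hl2 (y (jtwo v hl1 hl2 f)) f - phiF v hl1 hl2 (y v) f
        = 2 * t f := by
      have u1 := F3 f (jtwo v hl1 hl2 f) (jtwo_mem' v hl1 hl2 f)
      have u2 := F1' (jtwo v hl1 hl2 f) _ hj2S1
      rw [phiF, phiF]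
      linear_combination 2 * u1 + u2
    have hAP3 : ((a1 + a3 : ℕ) : ZMod M) = ((a2 + a2 : ℕ) : ZMod M) := by
      push_cast
      linear_combination -e1 + 2 * e2 - e3 + d2 - 2 * d1
    have hmod : (a1 + a3) ≡ (a2 + a2) [MOD M] := (ZMod.natCast_eq_natCast_iff _ _ _).mp hAP3
    have hlt1 : a1 + a3 < M := by have := hA0lt a1 ha1; have := hA0lt a3 ha3; omega
    have hlt2 : a2 + a2 < M := by have := hA0lt a2 ha2; omega
    have heq : a1 + a3 = a2 + a2 := by
      have h1 := Nat.mod_eq_of_lt hlt1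
      have h2 := Nat.mod_eq_of_lt hlt2
      unfold Nat.ModEq at hmod
      omega
    have ha12 : a1 = a2 := hAP ha1 ha2 ha3 heq
    have hfin : (a2 : ZMod M) - (a1 : ZMod M) = t f := by linear_combination d1 + e1 - e2
    rw [← hfin, ha12, sub_self]
  -- conclusion
  intro j
  funext E
  by_cases hjv : j = v
  · rw [hjv]
  by_cases hj : j ∈ E.1.val
  · exact F1 j E hj
  · have hvE : v ∈ E.1.val := E.2
    have hjE : j ∉ E.1.val.erase v := fun h => hj (Finset.mem_of_mem_erase h)
    set f : NEdge k l v := ⟨⟨insert j (E.1.val.erase v), by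
        rw [Finset.card_insert_of_notMem hjE, Finset.card_erase_of_mem hvE, E.1.2]
        omega⟩, by
        intro hc
        rcases Finset.mem_insert.mp hc with h | h
        · exact hjv h.symm
        · exact (Finset.mem_erase.mp h).1 rfl⟩ with hf
    have hjf : j ∈ f.1.val := Finset.mem_insert_self _ _
    have hSE : sEdge v f j hjf = E := by
      refine Subtype.ext (Subtype.ext ?_)
      show insert v ((insert j (E.1.val.erase v)).erase j) = E.1.val
      rw [Finset.erase_insert hjE, Finset.insert_erase hvE]
    have hfin := F3 f j hjf
    rw [hSE, F4 f] at hfin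
    exact sub_eq_zero.mp hfin

lemma count_avg {k l M : ℕ} [NeZero M] (v : Fin k) (hl1 : 1 ≤ l) (hl2 : 2 ≤ l)
    (A0 : Finset ℕ) (hA0lt : ∀ a ∈ A0, a < M) :
    ∃ c : NEdge k l v → ZMod M,
      M ^ (Fintype.card (SEdge k l v)) * A0.card ^ (Fintype.card (NEdge k l v))
        ≤ M ^ (Fintype.card (NEdge k l v)) *
          (Finset.univ.filter (fun x : SEdge k l v → ZMod M =>
            ∀ f, ∃ a ∈ A0, phiF v hl1 hl2 x f = c f + (a : ZMod M))).card := by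
  classical
  set W : (NEdge k l v → ZMod M) → ℕ := fun c => (Finset.univ.filter
    (fun x : SEdge k l v → ZMod M =>
      ∀ f, ∃ a ∈ A0, phiF v hl1 hl2 x f = c f + (a : ZMod M))).card with hWdef
  have hinner : ∀ φ : ZMod M, (∑ z : ZMod M,
      if ∃ a ∈ A0, φ = z + (a : ZMod M) then 1 else 0) = A0.card := by
    intro φ
    rw [← Finset.card_filter]
    have himg : Finset.univ.filter (fun z : ZMod M => ∃ a ∈ A0, φ = z + (a : ZMod M))
        = A0.image (fun a : ℕ => φ - (a : ZMod M)) := by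
      ext z
      simp only [Finset.mem_filter, Finset.mem_univ, true_and, Finset.mem_image]
      constructor
      · rintro ⟨a, ha, hz⟩; exact ⟨a, ha, by rw [hz]; ring⟩
      · rintro ⟨a, ha, hz⟩; exact ⟨a, ha, by rw [← hz]; ring⟩
    rw [himg, Finset.card_image_of_injOn]
    intro a ha b hb hab
    have : (a : ZMod M) = (b : ZMod M) := by
      have := sub_right_inj.mp hab; exact this
    have hva := ZMod.val_cast_of_lt (hA0lt a ha)
    have hvb := ZMod.val_cast_of_lt (hA0lt b hb)
    rw [← hva, ← hvb, this]
  have hsum : (∑ c : NEdge k l v → ZMod M, W c)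
      = M ^ (Fintype.card (SEdge k l v)) * A0.card ^ (Fintype.card (NEdge k l v)) := by
    have h1 : ∀ c, W c = ∑ x : SEdge k l v → ZMod M,
        ∏ f : NEdge k l v,
          (if ∃ a ∈ A0, phiF v hl1 hl2 x f = c f + (a : ZMod M) then 1 else 0) := by
      intro c
      show (Finset.univ.filter _).card = _
      rw [Finset.card_filter]
      refine Finset.sum_congr rfl (fun x _ => ?_)
      by_cases h : ∀ f, ∃ a ∈ A0, phiF v hl1 hl2 x f = c f + (a : ZMod M)
      · rw [if_pos h, Finset.prod_eq_one (fun f _ => if_pos (h f))]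
      · rw [if_neg h]
        push_neg at h
        obtain ⟨f, hf⟩ := h
        have hnf : ¬ (∃ a ∈ A0, phiF v hl1 hl2 x f = c f + (a : ZMod M)) := by
          push_neg; exact hf
        exact (Finset.prod_eq_zero (Finset.mem_univ f)
          (if_neg hnf : (if ∃ a ∈ A0, phiF v hl1 hl2 x f = c f + (a : ZMod M)
            then (1:ℕ) else 0) = 0)).symm
    simp_rw [h1]
    rw [Finset.sum_comm]
    have h2 : ∀ x : SEdge k l v → ZMod M,
        (∑ c : NEdge k l v → ZMod M, ∏ f : NEdge k l v,
          (if ∃ a ∈ A0, phiF v hl1 hl2 x f = c f + (a : ZMod M) then 1 else 0))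
        = A0.card ^ (Fintype.card (NEdge k l v)) := by
      intro x
      have := Finset.prod_univ_sum (fun _ : NEdge k l v => (Finset.univ : Finset (ZMod M)))
        (fun f z => if ∃ a ∈ A0, phiF v hl1 hl2 x f = z + (a : ZMod M) then (1:ℕ) else 0)
      rw [Fintype.piFinset_univ] at this
      rw [← this]
      rw [Finset.prod_congr rfl (fun f _ => hinner (phiF v hl1 hl2 x f)),
        Finset.prod_const, Finset.card_univ]
    simp_rw [h2]
    rw [Finset.sum_const, Finset.card_univ, smul_eq_mul, Fintype.card_fun, ZMod.card]
  have hne : (Finset.univ : Finset (NEdge k l v → ZMod M)).Nonempty :=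
    Finset.univ_nonempty
  obtain ⟨c, _, hc⟩ := Finset.exists_max_image Finset.univ W hne
  refine ⟨c, ?_⟩
  calc M ^ (Fintype.card (SEdge k l v)) * A0.card ^ (Fintype.card (NEdge k l v))
      = ∑ c' : NEdge k l v → ZMod M, W c' := hsum.symm
    _ ≤ (Finset.univ : Finset (NEdge k l v → ZMod M)).card • W c :=
        Finset.sum_le_card_nsmul _ _ _ (fun c' _ => hc c' (Finset.mem_univ c'))
    _ = M ^ (Fintype.card (NEdge k l v)) * W c := by
        rw [smul_eq_mul, Finset.card_univ, Fintype.card_fun, ZMod.card]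

lemma ghzPow_eval {k n : ℕ} (hk : 0 < k) (y : Fin k → Fin n → Fin 2) :
    statePow (ghzState k 2) n y = if ∀ j, y j = y ⟨0, hk⟩ then 1 else 0 := by
  classical
  unfold statePow ghzState
  split_ifs with hconst
  · refine Finset.prod_eq_one (fun t _ => ?_)
    have : Finset.univ.filter (fun i : Fin 2 => ∀ j : Fin k, y j t = i) = {y ⟨0, hk⟩ t} := by
      ext i
      simp only [Finset.mem_filter, Finset.mem_univ, true_and, Finset.mem_singleton]
      constructor
      · intro h; exact (h ⟨0, hk⟩).symm
      · intro h j; rw [congrFun (hconst j) t, h]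
    rw [this]; simp
  · push_neg at hconst
    obtain ⟨j, hj⟩ := hconst
    obtain ⟨t0, ht0⟩ := Function.ne_iff.mp hj
    refine Finset.prod_eq_zero (Finset.mem_univ t0) ?_
    have : Finset.univ.filter (fun i : Fin 2 => ∀ j : Fin k, y j t0 = i) = ∅ := by
      ext i
      simp only [Finset.mem_filter, Finset.mem_univ, true_and, Finset.notMem_empty, iff_false]
      intro h
      exact ht0 ((h j).trans (h ⟨0, hk⟩).symm)
    rw [this]; simp

lemma edge_nonempty {k l : ℕ} (hl1 : 1 ≤ l) (e : KEdge k l) : e.val.Nonempty :=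
  Finset.card_pos.mp (by rw [e.2]; omega)

lemma hyperPow_pattern {k l m M : ℕ} [NeZero M] (v : Fin k) (hl1 : 1 ≤ l)
    (dec : ZMod M ≃ (Fin m → Fin 2)) (z : Fin k → SEdge k l v → ZMod M) :
    statePow (hyperGHZ (fun e : KEdge k l => e.val) 2) m
      (fun j t e => if j ∈ e.val then dec (Dmap v (z j) e) t else 0)
    = if (∀ (e : KEdge k l) (j j' : Fin k), j ∈ e.val → j' ∈ e.val →
        Dmap v (z j) e = Dmap v (z j') e) then 1 else 0 := by
  classical
  unfold statePow hyperGHZ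
  split_ifs with hcons
  · refine Finset.prod_eq_one (fun t _ => ?_)
    set pick : KEdge k l → Fin k := fun e => e.val.min' (edge_nonempty hl1 e) with hpick
    have hpickmem : ∀ e : KEdge k l, pick e ∈ e.val := fun e => Finset.min'_mem _ _
    have : Finset.univ.filter (fun i : KEdge k l → Fin 2 =>
        ∀ (j : Fin k) (e : KEdge k l),
          (((if j ∈ e.val then dec (Dmap v (z j) e) t else 0) : Fin 2) : ℕ)
            = if j ∈ e.val then (i e : ℕ) else 0)
        = {fun e => dec (Dmap v (z (pick e)) e) t} := by
      ext i
      simp only [Finset.mem_filter, Finset.mem_univ, true_and, Finset.mem_singleton]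
      constructor
      · intro h
        funext e
        have := h (pick e) e
        rw [if_pos (hpickmem e), if_pos (hpickmem e)] at this
        exact (Fin.val_injective this).symm
      · intro h j e
        subst h
        by_cases hje : j ∈ e.val
        · rw [if_pos hje, if_pos hje]
          exact congrArg Fin.val (congrFun (congrArg dec (hcons e j (pick e) hje (hpickmem e))) t)
        · rw [if_neg hje, if_neg hje]; rfl
    rw [this]; simp
  · push_neg at hcons
    obtain ⟨e, j, j', hje, hje', hne⟩ := hcons
    have : ∃ t0 : Fin m, dec (Dmap v (z j) e) t0 ≠ dec (Dmap v (z j') e) t0 := by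
      by_contra hco
      push_neg at hco
      exact hne (dec.injective (funext hco))
    obtain ⟨t0, ht0⟩ := this
    refine Finset.prod_eq_zero (Finset.mem_univ t0) ?_
    have : Finset.univ.filter (fun i : KEdge k l → Fin 2 =>
        ∀ (jj : Fin k) (e' : KEdge k l),
          (((if jj ∈ e'.val then dec (Dmap v (z jj) e') t0 else 0) : Fin 2) : ℕ)
            = if jj ∈ e'.val then (i e' : ℕ) else 0) = ∅ := by
      ext i
      simp only [Finset.mem_filter, Finset.mem_univ, true_and, Finset.notMem_empty, iff_false]
      intro h
      have h1 := h j e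
      have h2 := h j' e
      rw [if_pos hje, if_pos hje] at h1
      rw [if_pos hje', if_pos hje'] at h2
      exact ht0 (Fin.val_injective (h1.trans h2.symm))
    rw [this]; simp

lemma le_slocc {k l : ℕ} (hk : 0 < k) (hl2 : 2 ≤ l) (v : Fin k) {m n : ℕ} (hm : 1 ≤ m)
    (hcard : 2^n * ((2:ℕ)^m) ^ (Fintype.card (NEdge k l v))
       ≤ ((2:ℕ)^m) ^ (Fintype.card (SEdge k l v))
          * (rothNumberNat (2^(m-1))) ^ (Fintype.card (NEdge k l v))) :
    SLOCCTo (statePow (hyperGHZ (fun e : KEdge k l => e.val) 2) m)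
      (statePow (ghzState k 2) n) := by
  classical
  have hl1 : 1 ≤ l := by omega
  haveI : NeZero ((2:ℕ)^m) := ⟨by positivity⟩
  obtain ⟨A0, hA0sub, hA0card, hAP⟩ := rothNumberNat_spec (2^(m-1))
  have hA0lt : ∀ a ∈ A0, a < 2^(m-1) := fun a ha => Finset.mem_range.mp (hA0sub ha)
  have hBM : 2 * 2^(m-1) ≤ (2:ℕ)^m := le_of_eq (by rw [← pow_succ']; congr 1; omega)
  have hA0ltM : ∀ a ∈ A0, a < (2:ℕ)^m := fun a ha => lt_of_lt_of_le (hA0lt a ha) (by omega)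
  obtain ⟨c, hc⟩ := count_avg (M := 2^m) v hl1 hl2 A0 hA0ltM
  set Wset := Finset.univ.filter (fun x : SEdge k l v → ZMod (2^m) =>
    ∀ f, ∃ a ∈ A0, phiF v hl1 hl2 x f = c f + (a : ZMod (2^m))) with hWset
  have hWcard : 2^n ≤ Wset.card := by
    rw [hA0card] at hc
    have h1 : 2^n * ((2:ℕ)^m) ^ (Fintype.card (NEdge k l v))
        ≤ ((2:ℕ)^m) ^ (Fintype.card (NEdge k l v)) * Wset.card :=
      le_trans hcard hc
    rw [mul_comm] at h1
    exact Nat.le_of_mul_le_mul_left h1 (by positivity)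
  have hcard2 : Fintype.card (Fin n → Fin 2) ≤ Fintype.card {x // x ∈ Wset} := by
    rw [Fintype.card_coe, Fintype.card_fun, Fintype.card_fin, Fintype.card_fin]
    exact hWcard
  obtain ⟨ι⟩ := Function.Embedding.nonempty_of_card_le hcard2
  have hMcard : Fintype.card (ZMod ((2:ℕ)^m)) = Fintype.card (Fin m → Fin 2) := by
    rw [ZMod.card, Fintype.card_fun, Fintype.card_fin, Fintype.card_fin]
  let dec : ZMod ((2:ℕ)^m) ≃ (Fin m → Fin 2) := Fintype.equivOfCardEq hMcard
  let g : Fin k → (Fin n → Fin 2) → (Fin m → KEdge k l → Fin 2) :=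
    fun j b t e => if j ∈ e.val then dec (Dmap v (ι b).1 e) t else 0
  refine ⟨fun j b a => if a = g j b then 1 else 0, fun y => ?_⟩
  have hcollapse : (∑ x : (j : Fin k) → Fin m → KEdge k l → Fin 2,
      (∏ j, if x j = g j (y j) then (1:ℂ) else 0)
        * statePow (hyperGHZ (fun e : KEdge k l => e.val) 2) m x)
      = statePow (hyperGHZ (fun e : KEdge k l => e.val) 2) m (fun j => g j (y j)) := by
    rw [Finset.sum_eq_single (fun j => g j (y j))]
    · rw [Finset.prod_eq_one (fun j _ => if_pos rfl), one_mul]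
    · intro x _ hx
      have hex : ∃ j, x j ≠ g j (y j) := by
        by_contra hco; push_neg at hco; exact hx (funext hco)
      obtain ⟨j, hj⟩ := hex
      rw [Finset.prod_eq_zero (Finset.mem_univ j)
        (if_neg hj : (if x j = g j (y j) then (1:ℂ) else 0) = 0), zero_mul]
    · intro h; exact absurd (Finset.mem_univ _) h
  rw [hcollapse]
  have hpat : (fun j => g j (y j))
      = fun j t e => if j ∈ e.val then dec (Dmap v ((ι (y j)).1) e) t else 0 := rfl
  rw [hpat, hyperPow_pattern v hl1 dec (fun j => (ι (y j)).1), ghzPow_eval hk]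
  by_cases hconst : ∀ j, y j = y v
  · rw [if_pos, if_pos]
    · intro e j j' hj hj'
      rw [hconst j, hconst j']
    · intro j
      rw [hconst j, hconst ⟨0, hk⟩]
  · rw [if_neg, if_neg]
    · intro hcons
      have hW : ∀ j f, ∃ a ∈ A0, phiF v hl1 hl2 ((ι (y j)).1) f = c f + (a : ZMod (2^m)) := by
        intro j
        exact (Finset.mem_filter.mp (ι (y j)).2).2
      have := key_comb v hl1 hl2 hBM A0 hA0lt hAP c (fun j => (ι (y j)).1) hW hcons
      apply hconst
      intro j
      exact ι.injective (Subtype.ext (this j))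
    · intro hall
      apply hconst
      intro j
      rw [hall j, hall v]

lemma ev_lin (K1 K2 K3 : ℝ) (h3 : 0 < K3) :
    ∀ᶠ n : ℕ in Filter.atTop, K1 + K2 * Real.sqrt n ≤ K3 * n := by
  have key : ∀ a : ℝ, ∀ᶠ n : ℕ in Filter.atTop, a ≤ (n:ℝ) := by
    intro a
    filter_upwards [Filter.eventually_ge_atTop ⌈a⌉₊] with n hn
    exact le_trans (Nat.le_ceil a) (by exact_mod_cast hn)
  set K2' := max K2 0 with hK2'
  have hK2'0 : 0 ≤ K2' := le_max_right _ _
  have hK30 : K3 ≠ 0 := ne_of_gt h3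
  filter_upwards [key (2 * K1 / K3), key ((2 * K2' / K3)^2)] with n hn1 hn2
  have hs0 : (0:ℝ) ≤ (n:ℝ) := Nat.cast_nonneg n
  have hsn : 0 ≤ Real.sqrt n := Real.sqrt_nonneg _
  have hsq2 : 2 * K2' / K3 ≤ Real.sqrt n := by
    have := Real.sqrt_le_sqrt hn2
    rwa [Real.sqrt_sq (by positivity)] at this
  have hss : Real.sqrt n * Real.sqrt n = (n:ℝ) := Real.mul_self_sqrt hs0
  have h1 : K1 ≤ K3 / 2 * n := by
    have hh : K3 / 2 * (2 * K1 / K3) = K1 := by field_simp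
    calc K1 = K3 / 2 * (2 * K1 / K3) := hh.symm
      _ ≤ K3 / 2 * n := mul_le_mul_of_nonneg_left hn1 (by positivity)
  have hstep : K2' ≤ K3 / 2 * Real.sqrt n := by
    have hh : K3 / 2 * (2 * K2' / K3) = K2' := by field_simp
    calc K2' = K3 / 2 * (2 * K2' / K3) := hh.symm
      _ ≤ K3 / 2 * Real.sqrt n := mul_le_mul_of_nonneg_left hsq2 (by positivity)
  have h2 : K2 * Real.sqrt n ≤ K3 / 2 * n := by
    calc K2 * Real.sqrt n ≤ K2' * Real.sqrt n :=
          mul_le_mul_of_nonneg_right (le_max_left _ _) hsn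
      _ ≤ (K3 / 2 * Real.sqrt n) * Real.sqrt n := mul_le_mul_of_nonneg_right hstep hsn
      _ = K3 / 2 * n := by rw [mul_assoc, hss]
  linarith

lemma hcard_eventually (C F : ℕ) (hC : 1 ≤ C) (ε : ℝ) (hε : 0 < ε) :
    ∀ᶠ n : ℕ in Filter.atTop,
      1 ≤ ⌊((C:ℝ)⁻¹ + ε) * n⌋₊ ∧
      2^n * ((2:ℕ)^⌊((C:ℝ)⁻¹ + ε) * n⌋₊) ^ F
        ≤ ((2:ℕ)^⌊((C:ℝ)⁻¹ + ε) * n⌋₊) ^ C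
          * (rothNumberNat (2^(⌊((C:ℝ)⁻¹ + ε) * n⌋₊ - 1))) ^ F := by
  have hC0 : (0:ℝ) < (C:ℝ) := by exact_mod_cast hC
  set x : ℝ := (C:ℝ)⁻¹ + ε with hx
  have hx0 : 0 < x := by positivity
  have hlg : (0:ℝ) < Real.log 2 := Real.log_pos (by norm_num)
  set lg := Real.log 2 with hlgdef
  have hone : ∀ᶠ n : ℕ in Filter.atTop, 1 ≤ ⌊x * n⌋₊ := by
    filter_upwards [Filter.eventually_ge_atTop ⌈x⁻¹⌉₊] with n hn
    have hxn : (1:ℝ) ≤ x * n := by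
      have h1 : x⁻¹ ≤ (n:ℝ) := le_trans (Nat.le_ceil _) (by exact_mod_cast hn)
      calc (1:ℝ) = x * x⁻¹ := (mul_inv_cancel₀ (ne_of_gt hx0)).symm
        _ ≤ x * n := mul_le_mul_of_nonneg_left h1 (le_of_lt hx0)
    exact Nat.le_floor (by exact_mod_cast hxn)
  have hlin := ev_lin (((F:ℝ) + C) * lg) (4 * F * Real.sqrt (x * lg)) (ε * C * lg)
    (by positivity)
  filter_upwards [hone, hlin] with n hm1 hlinn
  refine ⟨hm1, ?_⟩
  set m := ⌊x * n⌋₊ with hm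
  have hmub : (m:ℝ) ≤ x * n := Nat.floor_le (by positivity)
  have hmlb : x * n < (m:ℝ) + 1 := Nat.lt_floor_add_one _
  set s : ℝ := ((m - 1 : ℕ) : ℝ) with hs
  have hs_eq : s = (m:ℝ) - 1 := by
    rw [hs, Nat.cast_sub hm1, Nat.cast_one]
  have htwo : ∀ j : ℕ, (2:ℝ)^j = Real.exp ((j:ℝ) * lg) := by
    intro j
    rw [Real.exp_nat_mul, hlgdef, Real.exp_log (by norm_num : (0:ℝ) < 2)]
  have hRoth' : (2:ℝ)^(m-1) * Real.exp (-4 * Real.sqrt (s * lg))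
      ≤ (rothNumberNat (2^(m-1)) : ℝ) := by
    have hb := Behrend.roth_lower_bound (N := 2^(m-1))
    have hcast : (((2:ℕ)^(m-1) : ℕ) : ℝ) = (2:ℝ)^(m-1) := by push_cast; ring
    rw [hcast, Real.log_pow] at hb
    exact hb
  have hsle : Real.sqrt (s * lg) ≤ Real.sqrt (x * lg) * Real.sqrt n := by
    rw [← Real.sqrt_mul (by positivity) (n:ℝ)]
    apply Real.sqrt_le_sqrt
    have hsm : s ≤ (m:ℝ) := by rw [hs_eq]; linarith
    calc s * lg ≤ (x * n) * lg :=
          mul_le_mul_of_nonneg_right (le_trans hsm hmub) (le_of_lt hlg)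
      _ = x * lg * n := by ring
  have hCx : (C:ℝ) * x = 1 + C * ε := by
    rw [hx, mul_add, mul_inv_cancel₀ (ne_of_gt hC0)]
  have hCm : (1 + (C:ℝ) * ε) * n - C ≤ (C:ℝ) * m := by
    nlinarith [hmlb, hC0]
  have hfinal : (n:ℝ) * lg + (F:ℝ) * ((m:ℝ) * lg)
      ≤ (C:ℝ) * ((m:ℝ) * lg) + (F:ℝ) * (s * lg - 4 * Real.sqrt (s * lg)) := by
    have e1 : ((1 + (C:ℝ) * ε) * n - C) * lg ≤ (C:ℝ) * ((m:ℝ) * lg) := by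
      have := mul_le_mul_of_nonneg_right hCm (le_of_lt hlg)
      nlinarith [this]
    have e2 : 4 * (F:ℝ) * Real.sqrt (s * lg) ≤ 4 * F * (Real.sqrt (x * lg) * Real.sqrt n) :=
      mul_le_mul_of_nonneg_left hsle (by positivity)
    have e3 : (F:ℝ) * (s * lg) = (F:ℝ) * ((m:ℝ) - 1) * lg := by rw [hs_eq]; ring
    nlinarith [hlinn, e1, e2, e3]
  rw [← Nat.cast_le (α := ℝ)]
  push_cast
  calc (2:ℝ)^n * ((2:ℝ)^m)^F
      = Real.exp ((n:ℝ) * lg + (F:ℝ) * ((m:ℝ) * lg)) := by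
        rw [htwo n, htwo m, ← Real.exp_nat_mul, ← Real.exp_add]
    _ ≤ Real.exp ((C:ℝ) * ((m:ℝ) * lg) + (F:ℝ) * (s * lg - 4 * Real.sqrt (s * lg))) :=
        Real.exp_le_exp.mpr hfinal
    _ = ((2:ℝ)^m)^C * ((2:ℝ)^(m-1) * Real.exp (-4 * Real.sqrt (s * lg)))^F := by
        rw [htwo m, htwo (m-1), ← Real.exp_add, ← Real.exp_nat_mul, ← Real.exp_nat_mul,
          ← Real.exp_add]
        congr 1
        ring
    _ ≤ ((2:ℝ)^m)^C * ((rothNumberNat (2^(m-1)) : ℝ))^F := by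
        apply mul_le_mul_of_nonneg_left (pow_le_pow_left₀ (by positivity) hRoth' F)
          (by positivity)

lemma le_part {k l : ℕ} (hl : 2 ≤ l) (hlk : l ≤ k) :
    AsympRateLE (hyperGHZ (fun e : {s : Finset (Fin k) // s.card = l} => e.val) 2)
      (ghzState k 2) (((k - 1).choose (l - 1) : ℝ))⁻¹ := by
  intro ε hε
  have hk : 0 < k := by omega
  set v : Fin k := ⟨k-1, by omega⟩ with hv
  have hC : 1 ≤ (k-1).choose (l-1) := Nat.choose_pos (by omega)
  have hCS : Fintype.card (SEdge k l v) = (k-1).choose (l-1) := card_star (by omega) v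
  filter_upwards [hcard_eventually ((k-1).choose (l-1)) (Fintype.card (NEdge k l v)) hC ε hε]
    with n hn
  obtain ⟨hm1, hcard⟩ := hn
  refine ⟨⌊((((k-1).choose (l-1) : ℕ) : ℝ)⁻¹ + ε) * n⌋₊,
    le_slocc hk hl v hm1 (by rw [hCS]; exact hcard), Nat.floor_le (by positivity)⟩

lemma ge_part {k l : ℕ} (hl : 2 ≤ l) (hlk : l ≤ k) :
    AsympRateGE (hyperGHZ (fun e : {s : Finset (Fin k) // s.card = l} => e.val) 2)
      (ghzState k 2) (((k - 1).choose (l - 1) : ℝ))⁻¹ := by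
  intro ε hε
  refine Filter.Eventually.of_forall (fun n => fun m hm => ?_)
  have hk : 2 ≤ k := by omega
  have hC : 0 < (k-1).choose (l-1) := Nat.choose_pos (by omega)
  have hkey := ge_key hk (by omega) hm
  have hC' : (0:ℝ) < (((k-1).choose (l-1) : ℕ) : ℝ) := by exact_mod_cast hC
  have h1 : (n:ℝ) ≤ (((k-1).choose (l-1) : ℕ) : ℝ) * m := by exact_mod_cast hkey
  have h2 : ((((k-1).choose (l-1) : ℕ) : ℝ))⁻¹ * n ≤ m := by
    rw [inv_mul_le_iff₀ hC']
    exact h1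
  have h3 : (((((k-1).choose (l-1) : ℕ) : ℝ))⁻¹ - ε) * n
      ≤ ((((k-1).choose (l-1) : ℕ) : ℝ))⁻¹ * n := by
    apply mul_le_mul_of_nonneg_right _ (Nat.cast_nonneg n)
    linarith
  linarith

end Aux

/-- For the complete `l`-uniform hypergraph `K_k^l` on `[k]` (edges: all `l`-element
subsets of `[k]`), `ω(GHZ^{K_k^l}_2, GHZ_2) = 1/binom(k-1, l-1)`. -/
theorem ghz_complete_uniform_rate {k l : ℕ} (hl : 2 ≤ l) (hlk : l ≤ k) :
    AsympRateEq
      (hyperGHZ (fun e : {s : Finset (Fin k) // s.card = l} => e.val) 2)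
      (ghzState k 2) (((k - 1).choose (l - 1) : ℝ))⁻¹ := by
  exact ⟨le_part hl hlk, ge_part hl hlk⟩
end

section
/- Let 2 ≤ l ≤ k and let K_k^l be the complete l-uniform hypergraph on [k], whose edges are exactly the l-element subsets of [k]. Then the edge-connectivity of K_k^l equals binom(k−1, l−1); equivalently, a minimum cut is obtained by removing all edges incident with a single distinguished vertex. -/
open Finset Filter

lemma count_lemma {k l : ℕ} (hl : 2 ≤ l) (hlk : l ≤ k) (v : Fin k) :
    (Finset.univ.filter
      (fun e : {s : Finset (Fin k) // s.card = l} => v ∈ e.val)).card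
      = (k - 1).choose (l - 1) := by
  have hk1 : (Finset.univ.erase v).card = k - 1 := by
    rw [Finset.card_erase_of_mem (Finset.mem_univ v), Finset.card_univ, Fintype.card_fin]
  rw [← hk1, ← Finset.card_powersetCard (l-1) (Finset.univ.erase v)]
  refine Finset.card_bij' (fun e _ => e.val.erase v)
    (fun s hs => (⟨insert v s, by
      simp only [Finset.mem_powersetCard] at hs
      rw [Finset.card_insert_of_notMem (fun h => (Finset.mem_erase.mp (hs.1 h)).1 rfl), hs.2]
      omega⟩ : {s : Finset (Fin k) // s.card = l})) ?_ ?_ ?_ ?_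
  · intro e he
    simp only [Finset.mem_filter, Finset.mem_univ, true_and] at he
    rw [Finset.mem_powersetCard]
    refine ⟨fun x hx => ?_, ?_⟩
    · simp only [Finset.mem_erase] at hx ⊢
      exact ⟨hx.1, Finset.mem_univ x⟩
    · rw [Finset.card_erase_of_mem he, e.2]
  · intro s hs
    simp only [Finset.mem_filter, Finset.mem_univ, true_and, Finset.mem_insert]
    exact Or.inl trivial
  · intro e he
    simp only [Finset.mem_filter, Finset.mem_univ, true_and] at he
    ext1
    simp only [Finset.insert_erase he]
  · intro s hs
    simp only [Finset.mem_powersetCard] at hs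
    have hv : v ∉ s := fun h => (Finset.mem_erase.mp (hs.1 h)).1 rfl
    simp [Finset.erase_insert hv]

lemma conn_lemma {k l : ℕ} (hl : 2 ≤ l) (hlk : l ≤ k)
    (D : Finset {s : Finset (Fin k) // s.card = l})
    (hD : D.card < (k - 1).choose (l - 1)) :
    HConnectedOn (fun e : {s : Finset (Fin k) // s.card = l} => e.val) {e | e ∉ D} := by
  classical
  intro a b
  by_contra hab
  set R : Fin k → Prop :=
    Relation.ReflTransGen (HStep (fun e : {s : Finset (Fin k) // s.card = l} => e.val)
      {e | e ∉ D}) a with hR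
  set A : Finset (Fin k) := Finset.univ.filter R with hA
  have haA : a ∈ A := by
    simp only [hA, Finset.mem_filter, Finset.mem_univ, true_and]
    exact Relation.ReflTransGen.refl
  have hbA : b ∉ A := by
    simp only [hA, Finset.mem_filter, Finset.mem_univ, true_and]
    exact hab
  have cross : ∀ e : {s : Finset (Fin k) // s.card = l},
      (∃ x ∈ e.val, x ∈ A) → (∃ y ∈ e.val, y ∉ A) → e ∈ D := by
    rintro e ⟨x, hxe, hxA⟩ ⟨y, hye, hyA⟩
    by_contra heD
    apply hyA
    simp only [hA, Finset.mem_filter, Finset.mem_univ, true_and] at hxA ⊢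
    exact hxA.tail ⟨e, heD, hxe, hye⟩
  have hab' : a ≠ b := fun h => hbA (h ▸ haA)
  set g : Finset (Fin k) → Finset (Fin k) :=
    fun T => if T ⊆ A then insert b T else insert a T with hg
  set P := (Finset.univ.erase a).powersetCard (l - 1) with hP
  have hPcard : P.card = (k - 1).choose (l - 1) := by
    rw [hP, Finset.card_powersetCard, Finset.card_erase_of_mem (Finset.mem_univ a),
      Finset.card_univ, Fintype.card_fin]
  have key : ∀ T ∈ P, ∃ hT : (g T).card = l,
      (⟨g T, hT⟩ : {s : Finset (Fin k) // s.card = l}) ∈ D := by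
    intro T hT
    rw [hP, Finset.mem_powersetCard] at hT
    have haT : a ∉ T := fun h => (Finset.mem_erase.mp (hT.1 h)).1 rfl
    by_cases hTA : T ⊆ A
    · have hbT : b ∉ T := fun h => hbA (hTA h)
      have hcard : (g T).card = l := by
        rw [hg]; simp only [if_pos hTA]
        rw [Finset.card_insert_of_notMem hbT, hT.2]; omega
      refine ⟨hcard, ?_⟩
      apply cross
      · have hTne : T.Nonempty := by
          rw [← Finset.card_pos, hT.2]; omega
        obtain ⟨x, hx⟩ := hTne
        exact ⟨x, by simp [hg, if_pos hTA, Finset.mem_insert, hx], hTA hx⟩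
      · exact ⟨b, by simp [hg, if_pos hTA], hbA⟩
    · have hcard : (g T).card = l := by
        rw [hg]; simp only [if_neg hTA]
        rw [Finset.card_insert_of_notMem haT, hT.2]; omega
      refine ⟨hcard, ?_⟩
      obtain ⟨y, hyT, hyA⟩ := Finset.not_subset.mp hTA
      apply cross
      · exact ⟨a, by simp [hg, if_neg hTA], haA⟩
      · exact ⟨y, by simp [hg, if_neg hTA, Finset.mem_insert, hyT], hyA⟩
  have hle : P.card ≤ (D.image Subtype.val).card := by
    apply Finset.card_le_card_of_injOn g
    · intro T hT
      obtain ⟨h1, h2⟩ := key T hT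
      exact Finset.mem_image.mpr ⟨⟨g T, h1⟩, h2, rfl⟩
    · intro T1 h1 T2 h2 heq
      simp only [Finset.mem_coe, hP, Finset.mem_powersetCard] at h1 h2
      have ha1 : a ∉ T1 := fun h => (Finset.mem_erase.mp (h1.1 h)).1 rfl
      have ha2 : a ∉ T2 := fun h => (Finset.mem_erase.mp (h2.1 h)).1 rfl
      by_cases c1 : T1 ⊆ A <;> by_cases c2 : T2 ⊆ A
      · have hb1 : b ∉ T1 := fun h => hbA (c1 h)
        have hb2 : b ∉ T2 := fun h => hbA (c2 h)
        simp only [hg, if_pos c1, if_pos c2] at heq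
        have := congrArg (fun s => Finset.erase s b) heq
        simpa [Finset.erase_insert hb1, Finset.erase_insert hb2] using this
      · exfalso
        simp only [hg, if_pos c1, if_neg c2] at heq
        have : a ∈ insert b T1 := heq ▸ Finset.mem_insert_self a T2
        rcases Finset.mem_insert.mp this with h | h
        · exact hab' h
        · exact ha1 h
      · exfalso
        simp only [hg, if_neg c1, if_pos c2] at heq
        have : a ∈ insert b T2 := heq ▸ Finset.mem_insert_self a T1
        rcases Finset.mem_insert.mp this with h | h
        · exact hab' h
        · exact ha2 h
      · simp only [hg, if_neg c1, if_neg c2] at heq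
        have := congrArg (fun s => Finset.erase s a) heq
        simpa [Finset.erase_insert ha1, Finset.erase_insert ha2] using this
  rw [Finset.card_image_of_injective _ Subtype.val_injective] at hle
  omega

/-- The edge-connectivity of the complete `l`-uniform hypergraph `K_k^l` on `[k]`
equals `binom(k-1, l-1)`; equivalently, a minimum cut is obtained by removing all
edges incident with a single distinguished vertex (there are `binom(k-1,l-1)` such
edges for each vertex). -/
theorem edgeConn_complete_uniform {k l : ℕ} (hl : 2 ≤ l) (hlk : l ≤ k) :
    edgeConn (fun e : {s : Finset (Fin k) // s.card = l} => e.val)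
        = (k - 1).choose (l - 1) ∧
      ∀ v : Fin k,
        (Finset.univ.filter
          (fun e : {s : Finset (Fin k) // s.card = l} => v ∈ e.val)).card
          = (k - 1).choose (l - 1) := by
  classical
  refine ⟨?_, count_lemma hl hlk⟩
  have hmem : HEdgeConnected (fun e : {s : Finset (Fin k) // s.card = l} => e.val)
      ((k - 1).choose (l - 1)) := fun D hD => conn_lemma hl hlk D hD
  have h2k : 2 ≤ k := hl.trans hlk
  have hnot : ¬ HEdgeConnected (fun e : {s : Finset (Fin k) // s.card = l} => e.val)
      ((k - 1).choose (l - 1) + 1) := by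
    intro h
    set v0 : Fin k := ⟨0, by omega⟩ with hv0
    set v1 : Fin k := ⟨1, by omega⟩ with hv1
    set D : Finset {s : Finset (Fin k) // s.card = l} :=
      Finset.univ.filter (fun e => v0 ∈ e.val) with hDdef
    have hcard : D.card = (k - 1).choose (l - 1) := count_lemma hl hlk v0
    have hconn := h D (by omega) v0 v1
    have hstuck : ∀ x : Fin k,
        Relation.ReflTransGen
          (HStep (fun e : {s : Finset (Fin k) // s.card = l} => e.val) {e | e ∉ D}) v0 x
          → x = v0 := by
      intro x hx
      induction hx with
      | refl => rfl
      | tail h1 h2 ih =>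
        obtain ⟨e, heD, hce, hxe⟩ := h2
        exact absurd (Finset.mem_filter.mpr ⟨Finset.mem_univ e, ih ▸ hce⟩) heD
    have := hstuck v1 hconn
    simp only [hv0, hv1, Fin.mk.injEq] at this
    omega
  have hset : {m | HEdgeConnected (fun e : {s : Finset (Fin k) // s.card = l} => e.val) m}
      = Set.Iic ((k - 1).choose (l - 1)) := by
    ext m
    simp only [Set.mem_setOf_eq, Set.mem_Iic]
    constructor
    · intro hm
      by_contra hc
      push_neg at hc
      exact hnot (fun D hD => hm D (lt_of_lt_of_le hD hc))
    · intro hm D hD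
      exact hmem D (lt_of_lt_of_le hD hm)
  rw [edgeConn, hset, csSup_Iic]
end

section
/- Let k ≥ 3 and let C_k be the cycle graph on [k] (viewed as a hypergraph whose edges are the k pairs {1,2},{2,3},...,{k−1,k},{k,1}). Then ω(GHZ^{C_k}_2, GHZ_2) = 1/2; that is, asymptotically two k-party GHZ states per copy of the cycle of EPR pairs can be obtained via SLOCC. -/
open Finset Filter

/-!
Lower bound: flatten party `0` against the others. SLOCC cannot increase the rank of this
flattening, which is `2ⁿ` for `GHZ₂^{⊗n}`; in `m` copies of the cycle, party `0` only holds its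
halves of the `2m` EPR pairs on its two edges, so the rank is at most `2^{2m}` and `n ≤ 2m`.

Upper bound: every party projects its `m` copies of the cycle onto one basis vector. A GHZ index
`s` is encoded injectively as a pair `(x_s, y_s)`, and party `j` holding `s` puts the binary
expansion of `x_s + e·y_s` on each edge `e ∋ j`. The result is a GHZ state as soon as agreement on
all edges `{e, e+1}` forces all parties to hold the same `s`. Summing the edge relations
`x_{s_e} + e·y_{s_e} = x_{s_{e+1}} + e·y_{s_{e+1}}` around the cycle gives
`∑ₑ y_{s_e} = k·y_{s_0}`, whose only solutions are trivial if the `y`'s come from a Behrend-type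
set: numbers with `d`-bit digits in base `2^{k+d}` (so no carries occur) whose digit vectors lie
on a common sphere (which is strictly convex). By pigeonhole over the `≤ 2^{t+2d}` radii, some
sphere holds at least `2^{dt-t-2d}` of the `t`-digit vectors, so `m ≈ (k+d)t` copies yield
`n ≈ (k+2d)t` GHZ bits, and `(k+d)/(k+2d) → 1/2` as `d → ∞`.
-/

section Support

variable {ι γ : Type} [Fintype ι]

lemma card_filter_eq_indicator_range {f : ι → γ} (hf : Function.Injective f) {x : γ}
    {p : ι → Prop} [DecidablePred p] (hp : ∀ i, p i ↔ f i = x) :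
    ((univ.filter p).card : ℂ) = (Set.range f).indicator 1 x := by
  by_cases hx : x ∈ Set.range f
  · obtain ⟨i, rfl⟩ := hx
    rw [Set.indicator_of_mem (Set.mem_range_self i), Pi.one_apply, Nat.cast_eq_one, card_eq_one]
    exact ⟨i, by ext j; simp [hp, hf.eq_iff]⟩
  · rw [Set.indicator_of_notMem hx, Nat.cast_eq_zero, card_eq_zero, filter_eq_empty_iff]
    exact fun i _ hi => hx ⟨i, (hp i).mp hi⟩

lemma sum_mul_indicator_range [Fintype γ] {f : ι → γ} (hf : Function.Injective f) (g : γ → ℂ) :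
    ∑ x, g x * (Set.range f).indicator 1 x = ∑ i, g (f i) := by
  classical
  simp only [Set.indicator_apply, Pi.one_apply, mul_ite, mul_one, mul_zero]
  rw [← Finset.sum_filter, ← Finset.sum_image (fun i _ j _ h => hf h)]
  congr 1
  ext x
  simp

end Support

section TensorPower

variable {k : ℕ} {α : Fin k → Type} {ι : Type}

def powMap (f : ι → (j : Fin k) → α j) (m : ℕ) : (Fin m → ι) → (j : Fin k) → Fin m → α j :=
  fun I j t => f (I t) j

lemma powMap_injective {f : ι → (j : Fin k) → α j} (hf : Function.Injective f) (m : ℕ) :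
    Function.Injective (powMap f m) := fun _ _ h =>
  funext fun t => hf <| funext fun j => congrFun (congrFun h j) t

lemma statePow_indicator_range (f : ι → (j : Fin k) → α j) (m : ℕ) :
    statePow ((Set.range f).indicator 1) m = (Set.range (powMap f m)).indicator 1 := by
  classical
  funext x
  have hmem : (∀ t ∈ univ, (fun j => x j t) ∈ Set.range f) ↔ x ∈ Set.range (powMap f m) := by
    simp only [mem_univ, forall_const, Set.mem_range, Classical.skolem, powMap, funext_iff]
    exact ⟨fun ⟨I, hI⟩ => ⟨I, fun j t => hI t j⟩,
      fun ⟨I, hI⟩ => ⟨I, fun t j => hI j t⟩⟩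
  simp only [statePow, Set.indicator_apply, Pi.one_apply, prod_boole, hmem]

end TensorPower

lemma ghzState_eq_indicator (k r : ℕ) [NeZero k] :
    ghzState k r = (Set.range fun (i : Fin r) (_ : Fin k) => i).indicator 1 := by
  funext x
  exact card_filter_eq_indicator_range (fun i i' h => congrFun h 0) fun i => by
    simp only [funext_iff, eq_comm]

lemma statePow_ghzState (k r n : ℕ) [NeZero k] :
    statePow (ghzState k r) n =
      (Set.range fun (s : Fin n → Fin r) (_ : Fin k) => s).indicator 1 := by
  rw [ghzState_eq_indicator, statePow_indicator_range]
  rfl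

section Hypergraph

variable {k : ℕ} {E : Type} (H : E → Finset (Fin k)) {r : ℕ} [NeZero r]

def hyperBasis (i : E → Fin r) : (j : Fin k) → E → Fin r :=
  fun j e => if j ∈ H e then i e else 0

variable {H}

lemma hyperBasis_injective (hH : ∀ e, (H e).Nonempty) :
    Function.Injective (hyperBasis H (r := r)) := by
  intro i i' h
  funext e
  obtain ⟨j, hj⟩ := hH e
  simpa [hyperBasis, hj] using congrFun (congrFun h j) e

lemma hyperGHZ_eq_indicator [Fintype E] [DecidableEq E] (hH : ∀ e, (H e).Nonempty) :
    hyperGHZ H r = (Set.range (hyperBasis H)).indicator 1 := by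
  funext x
  refine card_filter_eq_indicator_range (hyperBasis_injective hH) fun i => ?_
  simp only [hyperBasis, funext_iff, Fin.ext_iff, apply_ite Fin.val, Fin.val_zero, eq_comm]

lemma card_image_powMap_hyperBasis_le [Fintype E] [DecidableEq E] (j : Fin k) (m : ℕ) :
    (univ.image fun I => powMap (hyperBasis H (r := r)) m I j).card
      ≤ (r ^ (univ.filter fun e => j ∈ H e).card) ^ m := by
  let g : (Fin m → {e // j ∈ H e} → Fin r) → Fin m → E → Fin r :=
    fun J t e => if h : j ∈ H e then J t ⟨e, h⟩ else 0
  calc _ ≤ (univ.image g).card := by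
        refine card_le_card fun x hx => ?_
        obtain ⟨I, -, rfl⟩ := mem_image.mp hx
        refine mem_image.mpr ⟨fun t e => I t e, mem_univ _, ?_⟩
        funext t e
        simp only [g, powMap, hyperBasis, dite_eq_ite]
    _ ≤ _ := card_image_le.trans_eq (by simp [Fintype.card_subtype])

end Hypergraph

lemma update_const_mem_range_const_iff {k : ℕ} {β : Type} {j₀ j₁ : Fin k} (hj : j₁ ≠ j₀)
    (b b' : β) :
    Function.update (fun _ => b') j₀ b ∈ Set.range (fun (c : β) (_ : Fin k) => c) ↔ b = b' := by
  refine ⟨fun ⟨c, hc⟩ => ?_, fun hb => ⟨b, ?_⟩⟩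
  · have h₀ := congrFun hc j₀
    have h₁ := congrFun hc j₁
    rw [Function.update_self] at h₀
    rw [Function.update_of_ne hj] at h₁
    rw [← h₀, h₁]
  · subst hb
    simp

lemma card_le_card_image_of_sloccTo_ghz {k : ℕ} {α : Fin k → Type} [∀ j, Fintype (α j)]
    [∀ j, DecidableEq (α j)] {ι β : Type} [Fintype ι] [Fintype β] [DecidableEq β]
    {f : ι → (j : Fin k) → α j} (hf : Function.Injective f) {j₀ j₁ : Fin k} (hj : j₁ ≠ j₀)
    (h : SLOCCTo ((Set.range f).indicator 1)
      ((Set.range fun (b : β) (_ : Fin k) => b).indicator 1)) :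
    Fintype.card β ≤ (univ.image fun i => f i j₀).card := by
  obtain ⟨A, hA⟩ := h
  set S := univ.image fun i => f i j₀
  let P : Matrix β S ℂ := fun b a => A j₀ b a
  let Q : Matrix S β ℂ := fun a b' =>
    ∑ i ∈ univ.filter (fun i => f i j₀ = a), ∏ j ∈ univ.erase j₀, A j b' (f i j)
  have hPQ : P * Q = 1 := by
    ext b b'
    rw [Matrix.one_apply]
    set y := Function.update (fun _ => b') j₀ b
    calc (P * Q) b b'
        = ∑ i, A j₀ b (f i j₀) * ∏ j ∈ univ.erase j₀, A j b' (f i j) := by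
          rw [Matrix.mul_apply]
          refine (sum_coe_sort S fun a => A j₀ b a * ∑ i ∈ univ.filter (fun i => f i j₀ = a),
            ∏ j ∈ univ.erase j₀, A j b' (f i j)).trans ?_
          rw [← sum_fiberwise_of_maps_to (g := fun i => f i j₀)
            fun i _ => mem_image_of_mem _ (mem_univ i)]
          refine sum_congr rfl fun a _ => ?_
          rw [mul_sum]
          exact sum_congr rfl fun i hi => by rw [(mem_filter.mp hi).2]
      _ = ∑ i, ∏ j, A j (y j) (f i j) := by
          refine sum_congr rfl fun i _ => ?_
          rw [← mul_prod_erase univ _ (mem_univ j₀)]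
          congr 1
          · simp [y]
          · exact prod_congr rfl fun j hj => by
              rw [show y j = b' from Function.update_of_ne (ne_of_mem_erase hj) _ _]
      _ = if b = b' then 1 else 0 := by
          have key := hA y
          rw [sum_mul_indicator_range hf, Set.indicator_apply, Pi.one_apply,
            if_congr (update_const_mem_range_const_iff hj b b') rfl rfl] at key
          exact key.symm
  calc Fintype.card β = (P * Q).rank := by rw [hPQ, Matrix.rank_one]
    _ ≤ P.rank := Matrix.rank_mul_le_left P Q
    _ ≤ Fintype.card S := Matrix.rank_le_card_width P
    _ = S.card := Fintype.card_coe S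

lemma sloccTo_ghz_of_forall {k : ℕ} [NeZero k] {α : Fin k → Type} [∀ j, Fintype (α j)]
    {ι β : Type} [Fintype ι] {f : ι → (j : Fin k) → α j} (hf : Function.Injective f)
    (c : β → ι) (hc : ∀ (y : Fin k → β) (I : ι), (∀ j, f I j = f (c (y j)) j) → ∀ j, y j = y 0) :
    SLOCCTo ((Set.range f).indicator 1) ((Set.range fun (b : β) (_ : Fin k) => b).indicator 1) := by
  classical
  refine ⟨fun j b x => if x = f (c b) j then 1 else 0, fun y => ?_⟩
  rw [sum_mul_indicator_range hf]
  simp only [prod_boole, mem_univ, forall_const]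
  by_cases hy : y ∈ Set.range fun (b : β) (_ : Fin k) => b
  · obtain ⟨b, rfl⟩ := hy
    simp only [Set.indicator_of_mem (Set.mem_range_self b), Pi.one_apply, ← funext_iff,
      hf.eq_iff, sum_ite_eq', mem_univ, if_true]
  · rw [Set.indicator_of_notMem hy]
    refine (sum_eq_zero fun I _ => if_neg fun hI => hy ⟨y 0, funext fun j => ?_⟩).symm
    exact (hc y I hI j).symm

section HypergraphBounds

variable {k : ℕ} {E : Type} [Fintype E] [DecidableEq E] {H : E → Finset (Fin k)}

lemma le_mul_card_filter_of_sloccTo (hH : ∀ e, (H e).Nonempty) {r : ℕ} (hr : 1 < r)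
    {j₀ j₁ : Fin k} (hj : j₁ ≠ j₀) {m n : ℕ}
    (h : SLOCCTo (statePow (hyperGHZ H r) m) (statePow (ghzState k r) n)) :
    n ≤ m * (univ.filter fun e => j₀ ∈ H e).card := by
  have : NeZero r := ⟨by omega⟩
  have : NeZero k := ⟨j₀.pos.ne'⟩
  rw [hyperGHZ_eq_indicator hH, statePow_indicator_range, statePow_ghzState] at h
  have hcard := (card_le_card_image_of_sloccTo_ghz (powMap_injective (hyperBasis_injective hH) m)
    hj h).trans (card_image_powMap_hyperBasis_le j₀ m)
  rw [Fintype.card_fun, Fintype.card_fin, Fintype.card_fin, ← pow_mul, mul_comm] at hcard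
  exact (Nat.pow_le_pow_iff_right hr).mp hcard

lemma sloccTo_ghz_of_edge_labels [NeZero k] (hH : ∀ e, (H e).Nonempty) {r m : ℕ} [NeZero r]
    {β : Type} (c : β → Fin m → E → Fin r)
    (hc : ∀ y : Fin k → β, (∀ e, ∀ j ∈ H e, ∀ j' ∈ H e, ∀ t, c (y j) t e = c (y j') t e) →
      ∀ j, y j = y 0) :
    SLOCCTo (statePow (hyperGHZ H r) m) ((Set.range fun (b : β) (_ : Fin k) => b).indicator 1) := by
  rw [hyperGHZ_eq_indicator hH, statePow_indicator_range]
  refine sloccTo_ghz_of_forall (powMap_injective (hyperBasis_injective hH) m) c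
    fun y I hI => hc y fun e j hj j' hj' t => ?_
  have h₁ := congrFun (congrFun (hI j) t) e
  have h₂ := congrFun (congrFun (hI j') t) e
  simp only [powMap, hyperBasis, if_pos hj, if_pos hj'] at h₁ h₂
  rw [← h₁, ← h₂]

end HypergraphBounds

lemma sum_mul_pow_lt {B t : ℕ} {a : Fin t → ℕ} (ha : ∀ i, a i < B) :
    ∑ i, a i * B ^ (i : ℕ) < B ^ t := by
  simpa [finFunctionFinEquiv_apply] using (finFunctionFinEquiv fun i => (⟨a i, ha i⟩ : Fin B)).isLt

lemma eq_of_sum_mul_pow_eq {B t : ℕ} {a b : Fin t → ℕ} (ha : ∀ i, a i < B) (hb : ∀ i, b i < B)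
    (h : ∑ i, a i * B ^ (i : ℕ) = ∑ i, b i * B ^ (i : ℕ)) : a = b := by
  have : (fun i => (⟨a i, ha i⟩ : Fin B)) = fun i => ⟨b i, hb i⟩ :=
    finFunctionFinEquiv.injective (Fin.ext (by simpa [finFunctionFinEquiv_apply]))
  funext i
  exact congrArg Fin.val (congrFun this i)

def digitsValue (B : ℕ) {t D : ℕ} (a : Fin t → Fin D) : ℕ :=
  ∑ i, (a i : ℕ) * B ^ (i : ℕ)

lemma digitsValue_lt {B t D : ℕ} (hDB : D ≤ B) (a : Fin t → Fin D) : digitsValue B a < B ^ t :=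
  sum_mul_pow_lt fun i => (a i).isLt.trans_le hDB

lemma eq_of_sum_eq_card_smul_of_dotProduct_self_eq {R ι n : Type} [CommRing R] [LinearOrder R]
    [IsStrictOrderedRing R] [Fintype n] {s : Finset ι} {a : ι → n → R} {a₀ : n → R}
    (hnorm : ∀ e ∈ s, a e ⬝ᵥ a e = a₀ ⬝ᵥ a₀) (hsum : ∑ e ∈ s, a e = s.card • a₀) :
    ∀ e ∈ s, a e = a₀ := by
  have hexpand : ∀ e ∈ s, (a e - a₀) ⬝ᵥ (a e - a₀) = 2 * (a₀ ⬝ᵥ a₀) - 2 * (a e ⬝ᵥ a₀) := by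
    intro e he
    rw [sub_dotProduct, dotProduct_sub, dotProduct_sub, hnorm e he, dotProduct_comm a₀ (a e)]
    ring
  have hzero : ∑ e ∈ s, (a e - a₀) ⬝ᵥ (a e - a₀) = 0 := by
    rw [sum_congr rfl hexpand, sum_sub_distrib, sum_const, ← mul_sum, ← sum_dotProduct, hsum,
      smul_dotProduct, nsmul_eq_mul, nsmul_eq_mul]
    ring
  intro e he
  rw [← sub_eq_zero, ← dotProduct_self_eq_zero]
  exact (sum_eq_zero_iff_of_nonneg fun e _ => sum_nonneg fun i _ => mul_self_nonneg _).mp hzero e he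

def sphereDigits (D t R : ℕ) : Finset (Fin t → Fin D) :=
  univ.filter fun a => ∑ i, (a i : ℕ) ^ 2 = R

lemma exists_le_mul_card_sphereDigits (D t : ℕ) :
    ∃ R, D ^ t ≤ (t * (D - 1) ^ 2 + 1) * (sphereDigits D t R).card := by
  have hmaps : ∀ a ∈ (univ : Finset (Fin t → Fin D)),
      ∑ i, (a i : ℕ) ^ 2 ∈ range (t * (D - 1) ^ 2 + 1) := by
    intro a _
    refine mem_range.mpr (Nat.lt_succ_of_le ?_)
    calc ∑ i, (a i : ℕ) ^ 2 ≤ ∑ _i : Fin t, (D - 1) ^ 2 :=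
          sum_le_sum fun i _ => Nat.pow_le_pow_left (by have := (a i).isLt; omega) 2
      _ = t * (D - 1) ^ 2 := by simp
  obtain ⟨R, -, hR⟩ := exists_le_card_fiber_of_nsmul_le_card_of_maps_to hmaps
    ⟨0, mem_range.mpr (Nat.succ_pos _)⟩ (b := ((D ^ t : ℕ) : ℚ) / (t * (D - 1) ^ 2 + 1 : ℕ))
    (by rw [card_range, nsmul_eq_mul, card_univ, Fintype.card_fun, Fintype.card_fin,
      Fintype.card_fin, mul_div_cancel₀ _ (by positivity)])
  refine ⟨R, ?_⟩
  rw [div_le_iff₀ (by positivity)] at hR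
  exact_mod_cast hR.trans_eq (mul_comm _ _)

lemma exists_two_pow_le_mul_card_sphereDigits {c d t n : ℕ} (h : n + t + 2 * d ≤ (c + 2 * d) * t) :
    ∃ R, 2 ^ n ≤ 2 ^ ((c + d) * t) * (sphereDigits (2 ^ d) t R).card := by
  obtain ⟨R, hR⟩ := exists_le_mul_card_sphereDigits (2 ^ d) t
  have hradii : t * (2 ^ d - 1) ^ 2 + 1 ≤ 2 ^ (t + 2 * d) := by
    have hsq : (2 ^ d - 1) ^ 2 ≤ 2 ^ (2 * d) := by
      rw [mul_comm, pow_mul]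
      exact Nat.pow_le_pow_left (Nat.sub_le _ _) 2
    calc t * (2 ^ d - 1) ^ 2 + 1 ≤ (t + 1) * 2 ^ (2 * d) := by
          nlinarith [Nat.one_le_two_pow (n := 2 * d)]
      _ ≤ 2 ^ t * 2 ^ (2 * d) := Nat.mul_le_mul_right _ Nat.lt_two_pow_self
      _ = 2 ^ (t + 2 * d) := (pow_add _ _ _).symm
  refine ⟨R, Nat.le_of_mul_le_mul_right (c := 2 ^ (t + 2 * d)) ?_ (by positivity)⟩
  calc 2 ^ n * 2 ^ (t + 2 * d) ≤ 2 ^ ((c + 2 * d) * t) := by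
        rw [← pow_add]
        exact Nat.pow_le_pow_right two_pos (by linarith)
    _ = 2 ^ ((c + d) * t) * (2 ^ d) ^ t := by rw [← pow_mul, ← pow_add]; ring_nf
    _ ≤ 2 ^ ((c + d) * t) * ((t * (2 ^ d - 1) ^ 2 + 1) * (sphereDigits (2 ^ d) t R).card) :=
        Nat.mul_le_mul_left _ hR
    _ ≤ 2 ^ ((c + d) * t) * (2 ^ (t + 2 * d) * (sphereDigits (2 ^ d) t R).card) := by gcongr
    _ = 2 ^ ((c + d) * t) * (sphereDigits (2 ^ d) t R).card * 2 ^ (t + 2 * d) := by ring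

section CycleRelation

variable {k : ℕ} [NeZero k]

lemma apply_eq_apply_zero_of_forall_add_one {γ : Type} {u : Fin k → γ}
    (h : ∀ e, u (e + 1) = u e) (e : Fin k) : u e = u 0 := by
  induction hn : (e : ℕ) generalizing e with
  | zero => rw [show e = 0 from Fin.ext hn]
  | succ n ih =>
    have he : e ≠ 0 := fun he => by simp [he] at hn
    rw [← sub_add_cancel e 1, h, ih (e - 1) (by rw [Fin.val_sub_one_of_ne_zero he, hn]; rfl)]

lemma val_sub_one_add_one (e : Fin k) :
    ((e - 1 : Fin k) : ℕ) + 1 = e + if e = 0 then k else 0 := by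
  split_ifs with he
  · subst he
    rw [Fin.sub_def]
    simp only [Fin.val_zero, Fin.val_one', add_zero, zero_add]
    rcases Nat.lt_or_ge k 2 with hk | hk
    · obtain rfl : k = 1 := by have := NeZero.pos k; omega
      rfl
    · rw [Nat.mod_eq_of_lt (by omega : 1 < k), Nat.mod_eq_of_lt (by omega)]
      omega
  · rw [Fin.val_sub_one_of_ne_zero he]
    have : (e : ℕ) ≠ 0 := fun h => he (Fin.ext h)
    omega

lemma sum_comp_add_one {M : Type} [AddCommMonoid M] (g : Fin k → M) :
    ∑ e, g (e + 1) = ∑ e, g e :=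
  Equiv.sum_comp (Equiv.addRight 1) g

lemma sum_eq_mul_of_cycle_relation {u v : Fin k → ℕ}
    (h : ∀ e : Fin k, u e + e * v e = u (e + 1) + e * v (e + 1)) : ∑ e, v e = k * v 0 := by
  have hsum := sum_congr rfl fun e (_ : e ∈ univ) => h e
  rw [sum_add_distrib, sum_add_distrib, sum_comp_add_one u] at hsum
  have hshift : ∑ e : Fin k, (e : ℕ) * v (e + 1) = ∑ e : Fin k, ((e - 1 : Fin k) : ℕ) * v e := by
    rw [← sum_comp_add_one fun e => ((e - 1 : Fin k) : ℕ) * v e]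
    simp
  have hweights : ∑ e : Fin k, (((e - 1 : Fin k) : ℕ) + 1) * v e
      = ∑ e : Fin k, (e : ℕ) * v e + k * v 0 := by
    simp only [val_sub_one_add_one, add_mul, sum_add_distrib, ite_mul, zero_mul, sum_ite_eq',
      mem_univ, if_true]
  simp only [add_mul, one_mul, sum_add_distrib] at hweights
  omega

end CycleRelation

lemma eq_of_cycle_relation {k : ℕ} [NeZero k] {B D t R : ℕ} (hB : k * D ≤ B) {x : Fin k → ℕ}
    {a : Fin k → Fin t → Fin D} (ha : ∀ e, a e ∈ sphereDigits D t R)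
    (h : ∀ e : Fin k, x e + e * digitsValue B (a e) = x (e + 1) + e * digitsValue B (a (e + 1)))
    (e : Fin k) : x e = x 0 ∧ a e = a 0 := by
  have hdigits : ∀ i, ∑ e, (a e i : ℕ) = k * a 0 i := by
    refine congrFun (eq_of_sum_mul_pow_eq (B := B) (fun i => ?_) (fun i => ?_) ?_)
    · calc ∑ e, (a e i : ℕ) < ∑ _e : Fin k, D :=
            sum_lt_sum_of_nonempty univ_nonempty fun e _ => (a e i).isLt
        _ = k * D := by simp
        _ ≤ B := hB
    · exact (Nat.mul_lt_mul_of_pos_left (a 0 i).isLt (NeZero.pos k)).trans_le hB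
    · have := sum_eq_mul_of_cycle_relation h
      simp only [digitsValue, sum_mul, mul_sum, mul_assoc] at this ⊢
      rw [sum_comm]
      exact this
  have hsphere : ∀ e, a e = a 0 := by
    have := eq_of_sum_eq_card_smul_of_dotProduct_self_eq (s := univ)
      (a := fun e i => ((a e i : ℕ) : ℤ)) (a₀ := fun i => ((a 0 i : ℕ) : ℤ)) ?_ ?_
    · intro e
      funext i
      exact Fin.ext (by exact_mod_cast congrFun (this e (mem_univ e)) i)
    · intro e _
      have h₁ := (mem_filter.mp (ha e)).2
      have h₀ := (mem_filter.mp (ha 0)).2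
      simp only [dotProduct, ← sq]
      exact_mod_cast h₁.trans h₀.symm
    · funext i
      simp only [Finset.sum_apply, card_univ, Fintype.card_fin, Pi.smul_apply, nsmul_eq_mul]
      exact_mod_cast hdigits i
  refine ⟨apply_eq_apply_zero_of_forall_add_one (fun e => ?_) e, hsphere e⟩
  have := h e
  rw [hsphere e, hsphere (e + 1)] at this
  omega

def cycleEdges (k : ℕ) [NeZero k] (e : Fin k) : Finset (Fin k) := {e, e + 1}

section Cycle

variable {k : ℕ} [NeZero k]

lemma cycleEdges_nonempty (e : Fin k) : (cycleEdges k e).Nonempty := insert_nonempty _ _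

lemma card_filter_mem_cycleEdges_le (j : Fin k) :
    (univ.filter fun e => j ∈ cycleEdges k e).card ≤ 2 := by
  refine (card_le_card (t := {j, j - 1}) fun e he => ?_).trans card_le_two
  rcases mem_insert.mp (mem_filter.mp he).2 with h | h
  · exact mem_insert.mpr (Or.inl h.symm)
  · exact mem_insert_of_mem (mem_singleton.mpr (eq_sub_of_add_eq (mem_singleton.mp h).symm))

lemma sloccTo_cycle_ghz (d t n : ℕ) (h : n + t + 2 * d ≤ (k + 2 * d) * t) :
    SLOCCTo (statePow (hyperGHZ (cycleEdges k) 2) ((k + d) * t + k))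
      (statePow (ghzState k 2) n) := by
  obtain ⟨R, hR⟩ := exists_two_pow_le_mul_card_sphereDigits h
  have hcard : Fintype.card (Fin n → Fin 2)
      ≤ Fintype.card (Fin (2 ^ ((k + d) * t)) × sphereDigits (2 ^ d) t R) := by
    simpa only [Fintype.card_fun, Fintype.card_fin, Fintype.card_prod, Fintype.card_coe] using hR
  obtain ⟨enc⟩ := Function.Embedding.nonempty_of_card_le hcard
  have hB : k * 2 ^ d ≤ 2 ^ (k + d) := by
    rw [pow_add]
    exact Nat.mul_le_mul_right _ Nat.lt_two_pow_self.le
  let label (s : Fin n → Fin 2) (e : Fin k) : ℕ :=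
    (enc s).1 + e * digitsValue (2 ^ (k + d)) (enc s).2.1
  have hlabel (s : Fin n → Fin 2) (e : Fin k) : label s e < 2 ^ ((k + d) * t + k) := by
    have hv : digitsValue (2 ^ (k + d)) (enc s).2.1 < 2 ^ ((k + d) * t) := by
      simpa only [pow_mul] using
        digitsValue_lt (Nat.pow_le_pow_right two_pos (Nat.le_add_left d k)) (enc s).2.1
    calc label s e < 2 ^ ((k + d) * t) + e * 2 ^ ((k + d) * t) :=
          add_lt_add_of_lt_of_le (enc s).1.isLt (Nat.mul_le_mul_left _ hv.le)
      _ = (e + 1) * 2 ^ ((k + d) * t) := by ring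
      _ ≤ 2 ^ k * 2 ^ ((k + d) * t) :=
          Nat.mul_le_mul_right _ (e.isLt.trans Nat.lt_two_pow_self)
      _ = 2 ^ ((k + d) * t + k) := by rw [pow_add, mul_comm]
  rw [statePow_ghzState]
  refine sloccTo_ghz_of_edge_labels cycleEdges_nonempty
    (fun s t e => finFunctionFinEquiv.symm ⟨label s e, hlabel s e⟩ t) fun y hy j => ?_
  have hrel (e : Fin k) : label (y e) e = label (y (e + 1)) e :=
    congrArg Fin.val (finFunctionFinEquiv.symm.injective
      (funext (hy e e (by simp [cycleEdges]) (e + 1) (by simp [cycleEdges]))))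
  have := eq_of_cycle_relation hB (fun e => (enc (y e)).2.2) hrel j
  exact enc.injective (Prod.ext (Fin.ext this.1) (Subtype.ext this.2))

end Cycle

lemma asympRateLE_of_sloccTo {k : ℕ} {α β : Fin k → Type} [∀ j, Fintype (α j)]
    {ψ : ((j : Fin k) → α j) → ℂ} {φ : ((j : Fin k) → β j) → ℂ} {c : ℝ}
    (h : ∀ ε > 0, ∃ a b e₁ e₂ : ℕ, 0 < b ∧ (a : ℝ) ≤ (c + ε) * b ∧
      ∀ t n, n + e₂ ≤ b * t → SLOCCTo (statePow ψ (a * t + e₁)) (statePow φ n)) :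
    AsympRateLE ψ φ c := by
  intro ε hε
  obtain ⟨a, b, e₁, e₂, hb, hab, hconv⟩ := h (ε / 2) (half_pos hε)
  have hb' : (0 : ℝ) < b := by exact_mod_cast hb
  have hc : 0 ≤ c + ε / 2 := nonneg_of_mul_nonneg_left ((Nat.cast_nonneg a).trans hab) hb'
  filter_upwards [eventually_ge_atTop ⌈((c + ε / 2) * e₂ + a + e₁) / (ε / 2)⌉₊] with n hn
  refine ⟨a * ((n + e₂) / b + 1) + e₁, hconv _ n (Nat.lt_mul_div_succ _ hb).le, ?_⟩
  have ht : (((n + e₂) / b : ℕ) : ℝ) ≤ (n + e₂) / b := by exact_mod_cast Nat.cast_div_le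
  have hn' := Nat.ceil_le.mp hn
  rw [div_le_iff₀ (half_pos hε)] at hn'
  calc ((a * ((n + e₂) / b + 1) + e₁ : ℕ) : ℝ) ≤ a * ((n + e₂) / b + 1) + e₁ := by
        push_cast
        gcongr
    _ = a / b * (n + e₂) + a + e₁ := by field_simp
    _ ≤ (c + ε / 2) * (n + e₂) + a + e₁ := by
        gcongr
        rwa [div_le_iff₀ hb']
    _ ≤ (c + ε) * n := by nlinarith

/-- For the cycle graph `C_k` on `[k]` (`k ≥ 3`), viewed as a hypergraph of EPR pairs,
`ω(GHZ^{C_k}_2, GHZ_2) = 1/2`: asymptotically two `k`-party GHZ states per copy of the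
cycle of EPR pairs can be obtained via SLOCC. -/
theorem ghz_cycle_rate {k : ℕ} (hk : 3 ≤ k) :
    AsympRateEq
      (hyperGHZ (fun e : Fin k =>
        ({e, ⟨(e.val + 1) % k, Nat.mod_lt _ (by omega)⟩} : Finset (Fin k))) 2)
      (ghzState k 2) (1 / 2 : ℝ) := by
  have : NeZero k := ⟨by omega⟩
  have hcycle : (fun e : Fin k =>
      ({e, ⟨(e.val + 1) % k, Nat.mod_lt _ (by omega)⟩} : Finset (Fin k))) = cycleEdges k := by
    funext e
    have : (⟨(e.val + 1) % k, Nat.mod_lt _ (by omega)⟩ : Fin k) = e + 1 :=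
      Fin.ext (by rw [Fin.val_add, Fin.val_one', Nat.add_mod_mod])
    rw [cycleEdges, this]
  rw [hcycle]
  refine ⟨asympRateLE_of_sloccTo fun ε hε => ?_, fun ε hε => Eventually.of_forall fun n m h => ?_⟩
  · obtain ⟨d, hd⟩ := exists_nat_ge ((k : ℝ) / (2 * ε))
    rw [div_le_iff₀ (by positivity)] at hd
    refine ⟨k + d, 2 * d + 2, k, 2 * d, by omega, ?_, fun t n hn => sloccTo_cycle_ghz d t n ?_⟩
    · push_cast
      nlinarith
    · nlinarith
  · have hn := (le_mul_card_filter_of_sloccTo cycleEdges_nonempty one_lt_two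
      (j₀ := 0) (j₁ := ⟨1, by omega⟩) (by simp [Fin.ext_iff]) h).trans
      (Nat.mul_le_mul_left m (card_filter_mem_cycleEdges_le 0))
    have : (n : ℝ) ≤ m * 2 := by exact_mod_cast hn
    nlinarith
end
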